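/- arXiv:2406.03623 — 6 statements merged into one kernel-verified Lean document; each statement's English description precedes it below -/
import Mathlib

section
/- There exist constants c, C > 0 such that for every integer N ≥ 1: (i) for every finite set A ⊆ ℕ_{≥1}, sup_{t∈ℝ} |∑_{n∈A} n^{-it}| = |A| (so the lower and upper democracy functions of the canonical basis {n^{-s}} of H_∞ are exactly N); (ii) for every finite A ⊆ ℕ_{≥1} with |A| ≥ N and every unimodular family (ε_n)_{n∈A}, sup_{t∈ℝ} |∑_{n∈A} ε_n n^{-it}| ≥ c·N^{1/2}; and (iii) there exist a finite set A ⊆ ℕ_{≥1} with |A| ≥ N and signs ε_n ∈ {−1, 1} for n ∈ A such that sup_{t∈ℝ} |∑_{n∈A} ε_n n^{-it}| ≤ C·N^{1/2}. (That is, the lower super-democracy function of {n^{-s}} in H_∞ grows like N^{1/2}.) -/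
open Filter Finset

/-- The `H_∞` norm of the ordinary Dirichlet polynomial `∑_{n∈A} a_n n^{-s}`:
`sup_{t∈ℝ} |∑_{n∈A} a_n n^{-it}|`, where `n^{-it} = e^{-it·log n}`. -/
noncomputable def ordinaryHinfNorm (A : Finset ℕ) (a : ℕ → ℂ) : ℝ :=
  ⨆ t : ℝ, ‖∑ n ∈ A, a n * Complex.exp (-(Complex.I * (t * Real.log n)))‖

/-!
For (i), the triangle inequality bounds the sum by `|A|`, with equality at `t = 0`.

For (ii), the frequencies `log n` are distinct, so every off-diagonal term of
`|f(t)|² = ∑_{m,n} ε_m ε̄_n (n/m)^{it}` has bounded integral over `[0, T]`. Hence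
`∫_0^T |f|² = T ∑ |ε_n|² + O(1) = T |A| + O(1)` (Bohr's mean value theorem), while the left
side is at most `T sup |f|²`; letting `T → ∞` gives `|A| ≤ sup |f|²`.

For (iii), on the lacunary set `{2^j : j < 2^k}` the Dirichlet polynomial is a polynomial in
`z = 2^{-it}`, `|z| = 1`. Taking the Rudin–Shapiro signs, the parallelogram law gives
`|P_k|² + |Q_k|² = 2^{k+1}` on the unit circle, so the sup is at most `2^{(k+1)/2} ≤ 2 √N` for
`k = ⌊log₂ N⌋ + 1`.
-/

open Complex ComplexConjugate intervalIntegral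

section DirichletPolynomial

variable {ι : Type*} (A : Finset ι) (freq : ι → ℝ) (a : ι → ℂ)

noncomputable def dirichletPolynomial (t : ℝ) : ℂ :=
  ∑ i ∈ A, a i * exp (-(I * (t * freq i)))

theorem norm_exp_neg_I_mul_ofReal (t x : ℝ) : ‖exp (-(I * (t * x)))‖ = 1 := by
  simp [norm_exp]

theorem norm_dirichletPolynomial_le (t : ℝ) :
    ‖dirichletPolynomial A freq a t‖ ≤ ∑ i ∈ A, ‖a i‖ :=
  (norm_sum_le _ _).trans_eq <| sum_congr rfl fun i _ => by
    rw [norm_mul, norm_exp_neg_I_mul_ofReal, mul_one]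

theorem bddAbove_range_norm_dirichletPolynomial :
    BddAbove (Set.range fun t => ‖dirichletPolynomial A freq a t‖) :=
  ⟨_, Set.forall_mem_range.2 (norm_dirichletPolynomial_le A freq a)⟩

theorem dirichletPolynomial_mul_conj (t : ℝ) :
    dirichletPolynomial A freq a t * conj (dirichletPolynomial A freq a t) =
      ∑ m ∈ A, ∑ n ∈ A, a m * conj (a n) * exp (I * (freq n - freq m : ℝ) * t) := by
  rw [dirichletPolynomial, map_sum, sum_mul_sum]
  refine sum_congr rfl fun m _ => sum_congr rfl fun n _ => ?_
  rw [map_mul, ← exp_conj, mul_mul_mul_comm, ← exp_add]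
  congr 2
  simp only [map_neg, map_mul, conj_I, conj_ofReal, ofReal_sub]
  ring

theorem integral_dirichletPolynomial_mul_conj (T : ℝ) :
    ∫ t in (0)..T, dirichletPolynomial A freq a t * conj (dirichletPolynomial A freq a t) =
      ∑ m ∈ A, ∑ n ∈ A, a m * conj (a n) *
        ∫ t in (0)..T, exp (I * (freq n - freq m : ℝ) * t) := by
  have hcont (m n : ι) :
      Continuous fun t : ℝ => a m * conj (a n) * exp (I * (freq n - freq m : ℝ) * t) := by
    fun_prop
  simp_rw [dirichletPolynomial_mul_conj]
  rw [integral_finsetSum fun m _ =>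
    (continuous_finsetSum _ fun n _ => hcont m n).intervalIntegrable _ _]
  refine sum_congr rfl fun m _ => ?_
  rw [integral_finsetSum fun n _ => (hcont m n).intervalIntegrable _ _]
  exact sum_congr rfl fun n _ => integral_const_mul _ _

theorem norm_integral_exp_I_mul_le {θ : ℝ} (hθ : θ ≠ 0) (T : ℝ) :
    ‖∫ t in (0)..T, exp (I * θ * t)‖ ≤ 2 / |θ| := by
  have hexp (s : ℝ) : ‖exp (I * θ * s)‖ = 1 := by simp [norm_exp]
  rw [integral_exp_mul_complex (by simpa using hθ), norm_div, norm_mul, norm_I, one_mul,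
    norm_real, Real.norm_eq_abs]
  gcongr
  calc ‖exp (I * θ * T) - exp (I * θ * (0 : ℝ))‖
      ≤ ‖exp (I * θ * T)‖ + ‖exp (I * θ * (0 : ℝ))‖ := norm_sub_le _ _
    _ = 2 := by rw [hexp, hexp]; norm_num

theorem norm_integral_dirichletPolynomial_mul_conj_sub_le [DecidableEq ι]
    (hfreq : Set.InjOn freq A) (T : ℝ) :
    ‖(∫ t in (0)..T, dirichletPolynomial A freq a t * conj (dirichletPolynomial A freq a t)) -
        ((T * ∑ i ∈ A, ‖a i‖ ^ 2 : ℝ) : ℂ)‖ ≤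
      ∑ m ∈ A, ∑ n ∈ A.erase m, ‖a m‖ * ‖a n‖ * (2 / |freq n - freq m|) := by
  set X : ι → ι → ℂ := fun m n =>
    a m * conj (a n) * ∫ t in (0)..T, exp (I * (freq n - freq m : ℝ) * t)
  have hdiag (m : ι) : X m m = ((T * ‖a m‖ ^ 2 : ℝ) : ℂ) := by
    simp only [X, sub_self, ofReal_zero, mul_zero, zero_mul, exp_zero, integral_const, sub_zero,
      real_smul, mul_one, mul_conj']
    push_cast; ring
  have hsplit : (∫ t in (0)..T,
        dirichletPolynomial A freq a t * conj (dirichletPolynomial A freq a t)) -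
      ((T * ∑ i ∈ A, ‖a i‖ ^ 2 : ℝ) : ℂ) = ∑ m ∈ A, ∑ n ∈ A.erase m, X m n := by
    rw [integral_dirichletPolynomial_mul_conj, ← sum_congr rfl fun m hm => add_sum_erase A _ hm,
      sum_add_distrib, mul_sum, ofReal_sum]
    simp only [X, hdiag]
    ring
  rw [hsplit]
  refine (norm_sum_le _ _).trans <| sum_le_sum fun m hm =>
    (norm_sum_le _ _).trans <| sum_le_sum fun n hn => ?_
  obtain ⟨hnm, hn⟩ := mem_erase.1 hn
  rw [norm_mul, norm_mul, norm_conj]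
  exact mul_le_mul_of_nonneg_left
    (norm_integral_exp_I_mul_le (sub_ne_zero.2 fun h => hnm (hfreq hn hm h)) T) (by positivity)

theorem sum_norm_sq_le_sq_of_norm_dirichletPolynomial_le (hfreq : Set.InjOn freq A) {M : ℝ}
    (hM : ∀ t, ‖dirichletPolynomial A freq a t‖ ≤ M) :
    ∑ i ∈ A, ‖a i‖ ^ 2 ≤ M ^ 2 := by
  classical
  set S := ∑ m ∈ A, ∑ n ∈ A.erase m, ‖a m‖ * ‖a n‖ * (2 / |freq n - freq m|)
  have hmean (T : ℝ) (hT : 0 < T) : ∑ i ∈ A, ‖a i‖ ^ 2 ≤ M ^ 2 + S / T := by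
    set f := fun t => dirichletPolynomial A freq a t * conj (dirichletPolynomial A freq a t)
    have hf : ‖∫ t in (0)..T, f t‖ ≤ M ^ 2 * T := by
      refine (norm_integral_le_of_norm_le_const fun t _ => ?_).trans_eq (by rw [sub_zero,
        abs_of_pos hT])
      rw [norm_mul, norm_conj, ← sq]
      exact pow_le_pow_left₀ (norm_nonneg _) (hM t) 2
    have hsum : T * ∑ i ∈ A, ‖a i‖ ^ 2 ≤ M ^ 2 * T + S := by
      have h := norm_le_norm_add_norm_sub (∫ t in (0)..T, f t)
        ((T * ∑ i ∈ A, ‖a i‖ ^ 2 : ℝ) : ℂ)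
      rw [norm_real, Real.norm_of_nonneg (by positivity)] at h
      linarith [norm_integral_dirichletPolynomial_mul_conj_sub_le A freq a hfreq T]
    rw [← sub_le_iff_le_add', le_div_iff₀ hT]
    linarith
  have hlim : Tendsto (fun T : ℝ => M ^ 2 + S / T) atTop (nhds (M ^ 2)) := by
    simpa using tendsto_const_nhds.add ((tendsto_const_nhds (x := S)).div_atTop tendsto_id)
  exact ge_of_tendsto hlim (eventually_gt_atTop 0 |>.mono hmean)

end DirichletPolynomial

section OrdinaryHinfNorm

variable {A : Finset ℕ} {a : ℕ → ℂ}

theorem norm_dirichletPolynomial_le_ordinaryHinfNorm (t : ℝ) :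
    ‖dirichletPolynomial A (fun n => Real.log n) a t‖ ≤ ordinaryHinfNorm A a :=
  le_ciSup (bddAbove_range_norm_dirichletPolynomial A _ a) t

theorem ordinaryHinfNorm_le {M : ℝ}
    (h : ∀ t, ‖dirichletPolynomial A (fun n => Real.log n) a t‖ ≤ M) :
    ordinaryHinfNorm A a ≤ M :=
  ciSup_le h

theorem ordinaryHinfNorm_one (A : Finset ℕ) : ordinaryHinfNorm A (fun _ => 1) = #A := by
  refine le_antisymm (ordinaryHinfNorm_le fun t => ?_) ?_
  · simpa using norm_dirichletPolynomial_le A (fun n => Real.log n) (fun _ => 1) t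
  · simpa [dirichletPolynomial] using norm_dirichletPolynomial_le_ordinaryHinfNorm
      (A := A) (a := fun _ => 1) 0

theorem injOn_log_natCast : Set.InjOn (fun n : ℕ => Real.log n) {n | 1 ≤ n} :=
  fun m hm n hn h => by
    exact_mod_cast Real.log_injOn_pos (Set.mem_Ioi.2 (Nat.cast_pos.2 hm))
      (Set.mem_Ioi.2 (Nat.cast_pos.2 hn)) h

theorem sqrt_card_le_ordinaryHinfNorm (hA : ∀ n ∈ A, 1 ≤ n)
    (ha : ∀ n ∈ A, ‖a n‖ = 1) :
    √(#A : ℝ) ≤ ordinaryHinfNorm A a := by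
  have hM : 0 ≤ ordinaryHinfNorm A a := Real.iSup_nonneg fun _ => norm_nonneg _
  rw [Real.sqrt_le_left hM]
  calc (#A : ℝ) = ∑ n ∈ A, ‖a n‖ ^ 2 := by simp +contextual [ha]
    _ ≤ ordinaryHinfNorm A a ^ 2 :=
      sum_norm_sq_le_sq_of_norm_dirichletPolynomial_le A _ a (injOn_log_natCast.mono hA)
        norm_dirichletPolynomial_le_ordinaryHinfNorm

end OrdinaryHinfNorm

section RudinShapiro

def rudinShapiro : ℕ → (ℕ → ℝ) × (ℕ → ℝ)
  | 0 => (fun _ => 1, fun _ => 1)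
  | k + 1 => (fun j => if j < 2 ^ k then (rudinShapiro k).1 j else (rudinShapiro k).2 (j - 2 ^ k),
      fun j => if j < 2 ^ k then (rudinShapiro k).1 j else -(rudinShapiro k).2 (j - 2 ^ k))

theorem abs_rudinShapiro (k j : ℕ) :
    |(rudinShapiro k).1 j| = 1 ∧ |(rudinShapiro k).2 j| = 1 := by
  induction k generalizing j with
  | zero => simp [rudinShapiro]
  | succ k ih =>
    simp only [rudinShapiro]
    split_ifs <;> simp [ih]

noncomputable def rudinShapiroP (k : ℕ) (z : ℂ) : ℂ :=
  ∑ j ∈ range (2 ^ k), ((rudinShapiro k).1 j : ℂ) * z ^ j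

noncomputable def rudinShapiroQ (k : ℕ) (z : ℂ) : ℂ :=
  ∑ j ∈ range (2 ^ k), ((rudinShapiro k).2 j : ℂ) * z ^ j

theorem sum_range_add_ite_mul_pow (n m : ℕ) (p q : ℕ → ℝ) (z : ℂ) :
    ∑ j ∈ range (n + m), ((if j < n then p j else q (j - n) : ℝ) : ℂ) * z ^ j =
      ∑ j ∈ range n, (p j : ℂ) * z ^ j + z ^ n * ∑ j ∈ range m, (q j : ℂ) * z ^ j := by
  rw [sum_range_add, mul_sum]
  congr 1
  · exact sum_congr rfl fun j hj => by rw [if_pos (mem_range.1 hj)]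
  · refine sum_congr rfl fun j _ => ?_
    rw [if_neg (by omega), Nat.add_sub_cancel_left, pow_add]
    ring

theorem rudinShapiroP_succ (k : ℕ) (z : ℂ) :
    rudinShapiroP (k + 1) z = rudinShapiroP k z + z ^ 2 ^ k * rudinShapiroQ k z := by
  rw [rudinShapiroP, pow_succ, mul_two]
  exact sum_range_add_ite_mul_pow _ _ _ _ z

theorem rudinShapiroQ_succ (k : ℕ) (z : ℂ) :
    rudinShapiroQ (k + 1) z = rudinShapiroP k z - z ^ 2 ^ k * rudinShapiroQ k z := by
  rw [rudinShapiroQ, pow_succ, mul_two]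
  refine (sum_range_add_ite_mul_pow _ _ _ (fun j => -(rudinShapiro k).2 j) z).trans ?_
  simp [rudinShapiroP, rudinShapiroQ, sub_eq_add_neg]

theorem norm_rudinShapiroP_sq_add_norm_rudinShapiroQ_sq (k : ℕ) {z : ℂ} (hz : ‖z‖ = 1) :
    ‖rudinShapiroP k z‖ ^ 2 + ‖rudinShapiroQ k z‖ ^ 2 = 2 ^ (k + 1) := by
  induction k with
  | zero => simp [rudinShapiroP, rudinShapiroQ, rudinShapiro]; norm_num
  | succ k ih =>
    rw [rudinShapiroP_succ, rudinShapiroQ_succ, parallelogram_law_with_norm ℂ, norm_mul, norm_pow,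
      hz, one_pow, one_mul, ih, pow_succ _ (k + 1)]
    ring

theorem norm_rudinShapiroP_le (k : ℕ) {z : ℂ} (hz : ‖z‖ = 1) :
    ‖rudinShapiroP k z‖ ≤ √(2 ^ (k + 1)) := by
  rw [Real.le_sqrt (norm_nonneg _) (by positivity),
    ← norm_rudinShapiroP_sq_add_norm_rudinShapiroQ_sq k hz]
  exact le_add_of_nonneg_right (sq_nonneg _)

theorem dirichletPolynomial_image_two_pow (m : ℕ) (c : ℕ → ℝ) (t : ℝ) :
    dirichletPolynomial ((range m).image (2 ^ ·) : Finset ℕ) (fun n => Real.log n)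
        (fun n => (c (Nat.log 2 n) : ℂ)) t =
      ∑ j ∈ range m, (c j : ℂ) * exp (-(I * (t * Real.log 2))) ^ j := by
  rw [dirichletPolynomial, sum_image fun i _ j _ h => Nat.pow_right_injective le_rfl h]
  refine sum_congr rfl fun j _ => ?_
  rw [Nat.log_pow one_lt_two, ← exp_nat_mul]
  push_cast
  rw [Real.log_pow]
  push_cast
  ring_nf

theorem ordinaryHinfNorm_rudinShapiro_le (k : ℕ) :
    ordinaryHinfNorm ((range (2 ^ k)).image (2 ^ ·))
        (fun n => ((rudinShapiro k).1 (Nat.log 2 n) : ℂ)) ≤ √(2 ^ (k + 1)) :=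
  ordinaryHinfNorm_le fun t => by
    rw [dirichletPolynomial_image_two_pow]
    exact norm_rudinShapiroP_le k (norm_exp_neg_I_mul_ofReal t _)

theorem exists_signs_ordinaryHinfNorm_le_two_mul_sqrt {N : ℕ} (hN : N ≠ 0) :
    ∃ (A : Finset ℕ) (ε : ℕ → ℝ), (∀ n ∈ A, 1 ≤ n) ∧ N ≤ #A ∧
      (∀ n ∈ A, ε n = 1 ∨ ε n = -1) ∧
      ordinaryHinfNorm A (fun n => (ε n : ℂ)) ≤ 2 * √N := by
  set k := Nat.log 2 N + 1
  refine ⟨(range (2 ^ k)).image (2 ^ ·), fun n => (rudinShapiro k).1 (Nat.log 2 n),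
    fun n hn => ?_, ?_, fun n _ => (abs_eq zero_le_one).1 (abs_rudinShapiro k _).1,
    (ordinaryHinfNorm_rudinShapiro_le k).trans ?_⟩
  · obtain ⟨j, -, rfl⟩ := mem_image.1 hn
    exact Nat.one_le_two_pow
  · rw [card_image_of_injective _ (Nat.pow_right_injective le_rfl), card_range]
    exact (Nat.lt_pow_succ_log_self one_lt_two N).le
  · have h : 2 ^ (k + 1) ≤ 2 ^ 2 * N :=
      calc 2 ^ (k + 1) = 2 ^ 2 * 2 ^ Nat.log 2 N := by ring
        _ ≤ 2 ^ 2 * N := Nat.mul_le_mul_left _ (Nat.pow_log_le_self 2 hN)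
    calc √(2 ^ (k + 1)) ≤ √(2 ^ 2 * N) := Real.sqrt_le_sqrt (by exact_mod_cast h)
      _ = 2 * √N := by rw [Real.sqrt_mul (by positivity), Real.sqrt_sq zero_le_two]

end RudinShapiro

/-- In `H_∞`: the lower and upper democracy functions of `{n^{-s}}` are exactly `N`, and the
lower super-democracy function grows like `N^{1/2}`. -/
theorem democracy_Hinf :
    ∃ c C : ℝ, 0 < c ∧ 0 < C ∧ ∀ N : ℕ, 1 ≤ N →
      ((∀ A : Finset ℕ, (∀ n ∈ A, 1 ≤ n) →
          ordinaryHinfNorm A (fun _ => 1) = A.card) ∧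
        (∀ (A : Finset ℕ) (ε : ℕ → ℂ), (∀ n ∈ A, 1 ≤ n) → N ≤ A.card →
          (∀ n ∈ A, ‖ε n‖ = 1) →
          c * Real.sqrt N ≤ ordinaryHinfNorm A ε) ∧
        (∃ (A : Finset ℕ) (ε : ℕ → ℝ), (∀ n ∈ A, 1 ≤ n) ∧ N ≤ A.card ∧
          (∀ n ∈ A, ε n = 1 ∨ ε n = -1) ∧
          ordinaryHinfNorm A (fun n => (ε n : ℂ)) ≤ C * Real.sqrt N)) := by
  refine ⟨1, 2, one_pos, two_pos, fun N hN => ⟨fun A _ => ordinaryHinfNorm_one A, ?_,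
    exists_signs_ordinaryHinfNorm_le_two_mul_sqrt (Nat.one_le_iff_ne_zero.1 hN)⟩⟩
  intro A ε hA hcard hε
  calc 1 * √(N : ℝ) = √N := one_mul _
    _ ≤ √(#A : ℝ) := Real.sqrt_le_sqrt (by exact_mod_cast hcard)
    _ ≤ ordinaryHinfNorm A ε := sqrt_card_le_ordinaryHinfNorm hA hε
end

section
/- Let λ be any frequency and fix 1 < p ≤ 2. There exist constants c, C, c', C' > 0 such that for every integer N ≥ 1: (i) for every finite A ⊆ ℕ with |A| ≥ N and every unimodular (ε_n)_{n∈A}, liminf_{R→∞} M_{p,R}((ε_n)) ≥ c·N^{1/p'}; (ii) there exists a finite A with |A| ≥ N such that limsup_{R→∞} M_{p,R}((1)_{n∈A}) ≤ C·N^{1/2}; (iii) for every finite A with |A| ≤ N and every unimodular (ε_n), limsup_{R→∞} M_{p,R}((ε_n)) ≤ C'·N^{1/2}; and (iv) there exists a finite A with |A| ≤ N such that liminf_{R→∞} M_{p,R}((1)_{n∈A}) ≥ c'·N^{1/2}. -/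
/-!
Everything is compared with the mean of `|P|²`, which by Parseval tends to `|A|` when the
frequencies `λ_n`, `n ∈ A`, are distinct and the coefficients unimodular. For `p ≤ 2` the power
mean inequality gives `M_p ≤ M_2`, hence (ii) and (iii). For (i), `|P| ≤ |A|` pointwise gives
`|P|² ≤ |A|^{2-p} |P|^p`. For (iv), take `A = {n_1, …, n_N}` along a lacunary subsequence,
`λ_{n_{k+1}} > 2 λ_{n_k}`: a sum `λ_{n_j} + λ_{n_k}` determines `{j, k}`, so Parseval applied
to `P²` gives `M_4(P)⁴ ≲ 2N²`, and Hölder's `M_2⁶ ≤ M_1² M_4⁴` forces `M_p ≥ M_1 ≳ √N`.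
-/

open MeasureTheory Filter Finset

/-- `M_{p,R}((a_n)_{n∈A}) = ((1/(2R)) ∫_{-R}^{R} |∑_{n∈A} a_n e^{-iλ_n t}|^p dt)^{1/p}`,
whose limit as `R → ∞` defines the `H_p^λ` norm of the `λ`-Dirichlet polynomial
`∑_{n∈A} a_n e^{-λ_n s}`. -/
noncomputable def dirichletMpR (Λ : ℕ → ℝ) (p : ℝ) (A : Finset ℕ) (a : ℕ → ℂ) (R : ℝ) : ℝ :=
  ((1 / (2 * R)) * ∫ t in (-R)..R,
      ‖∑ n ∈ A, a n * Complex.exp (-(Complex.I * (Λ n * t)))‖ ^ p) ^ (1 / p)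

open Complex (I exp)
open ComplexConjugate Topology

noncomputable def centeredMean {E : Type*} [NormedAddCommGroup E] [NormedSpace ℝ E]
    (f : ℝ → E) (R : ℝ) : E :=
  (1 / (2 * R)) • ∫ t in (-R)..R, f t

section centeredMean

variable {E : Type*} [NormedAddCommGroup E] [NormedSpace ℝ E]

lemma centeredMean_const [CompleteSpace E] (c : E) {R : ℝ} (hR : R ≠ 0) :
    centeredMean (fun _ => c) R = c := by
  rw [centeredMean, intervalIntegral.integral_const, smul_smul, sub_neg_eq_add, ← two_mul,
    one_div, inv_mul_cancel₀ (mul_ne_zero two_ne_zero hR), one_smul]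

lemma centeredMean_sum {ι : Type*} (S : Finset ι) {f : ι → ℝ → E} {R : ℝ}
    (hf : ∀ i ∈ S, IntervalIntegrable (f i) volume (-R) R) :
    centeredMean (fun t => ∑ i ∈ S, f i t) R = ∑ i ∈ S, centeredMean (f i) R := by
  rw [centeredMean, intervalIntegral.integral_finsetSum hf, Finset.smul_sum]
  rfl

lemma centeredMean_const_mul {𝕜 : Type*} [RCLike 𝕜] (c : 𝕜) (f : ℝ → 𝕜) (R : ℝ) :
    centeredMean (fun t => c * f t) R = c * centeredMean f R := by
  rw [centeredMean, centeredMean, intervalIntegral.integral_const_mul, mul_smul_comm]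

lemma re_centeredMean {𝕜 : Type*} [RCLike 𝕜] {f : ℝ → 𝕜} {R : ℝ}
    (hf : IntervalIntegrable f volume (-R) R) :
    RCLike.re (centeredMean f R) = centeredMean (fun t => RCLike.re (f t)) R := by
  rw [centeredMean, centeredMean, intervalIntegral.intervalIntegral_re hf, RCLike.smul_re]
  rfl

lemma centeredMean_nonneg {f : ℝ → ℝ} (hf : ∀ t, 0 ≤ f t) {R : ℝ} (hR : 0 ≤ R) :
    0 ≤ centeredMean f R :=
  mul_nonneg (by positivity) (intervalIntegral.integral_nonneg (by linarith) fun t _ => hf t)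

lemma centeredMean_mono {f g : ℝ → ℝ} {R : ℝ} (hR : 0 ≤ R)
    (hf : IntervalIntegrable f volume (-R) R) (hg : IntervalIntegrable g volume (-R) R)
    (hfg : ∀ t, f t ≤ g t) : centeredMean f R ≤ centeredMean g R :=
  mul_le_mul_of_nonneg_left (intervalIntegral.integral_mono_on (by linarith) hf hg
    fun t _ => hfg t) (by positivity)

end centeredMean

lemma tendsto_centeredMean_exp (μ : ℝ) :
    Tendsto (centeredMean fun t : ℝ => exp (I * (μ * t))) atTop (𝓝 (if μ = 0 then 1 else 0)) := by
  rcases eq_or_ne μ 0 with rfl | hμ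
  · refine tendsto_const_nhds.congr' ?_
    filter_upwards [eventually_ne_atTop 0] with R hR
    simpa using (centeredMean_const (1 : ℂ) hR).symm
  rw [if_neg hμ]
  have hIμ : I * μ ≠ 0 := mul_ne_zero Complex.I_ne_zero (by exact_mod_cast hμ)
  have hbound : ∀ R > 0, ‖centeredMean (fun t : ℝ => exp (I * (μ * t))) R‖ ≤ |μ|⁻¹ / R := by
    intro R hR
    have hint : ∫ t in (-R)..R, exp (I * (μ * t)) =
        (exp (I * μ * R) - exp (I * μ * (-R : ℝ))) / (I * μ) := by
      simp_rw [← mul_assoc]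
      exact integral_exp_mul_complex hIμ
    have hunit : ∀ x : ℝ, ‖exp (I * μ * x)‖ = 1 := fun x => by
      rw [mul_assoc, ← Complex.ofReal_mul, Complex.norm_exp_I_mul_ofReal]
    rw [centeredMean, hint, norm_smul, Real.norm_of_nonneg (by positivity), norm_div, norm_mul,
      Complex.norm_I, one_mul, Complex.norm_real, Real.norm_eq_abs]
    calc 1 / (2 * R) * (‖exp (I * μ * R) - exp (I * μ * (-R : ℝ))‖ / |μ|)
        ≤ 1 / (2 * R) * (2 / |μ|) := by
          gcongr
          exact (norm_sub_le _ _).trans (by rw [hunit, hunit]; norm_num)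
      _ = |μ|⁻¹ / R := by field_simp
  exact squeeze_zero_norm' (eventually_gt_atTop 0 |>.mono hbound)
    (tendsto_id.const_div_atTop _)

noncomputable def dirichletPoly {ι : Type*} (θ : ι → ℝ) (S : Finset ι) (a : ι → ℂ) (t : ℝ) : ℂ :=
  ∑ s ∈ S, a s * exp (-(I * (θ s * t)))

lemma dirichletMpR_eq_centeredMean (Λ : ℕ → ℝ) (p : ℝ) (A : Finset ℕ) (a : ℕ → ℂ) (R : ℝ) :
    dirichletMpR Λ p A a R = centeredMean (fun t => ‖dirichletPoly Λ A a t‖ ^ p) R ^ (1 / p) :=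
  rfl

section dirichletPoly

variable {ι : Type*} (θ : ι → ℝ) (S : Finset ι)

lemma continuous_dirichletPoly (a : ι → ℂ) : Continuous (dirichletPoly θ S a) :=
  continuous_finsetSum _ fun _ _ => by fun_prop

lemma norm_dirichletPoly_le_card {a : ι → ℂ} (ha : ∀ s ∈ S, ‖a s‖ = 1) (t : ℝ) :
    ‖dirichletPoly θ S a t‖ ≤ S.card := by
  refine (norm_sum_le _ _).trans_eq ?_
  rw [Finset.card_eq_sum_ones, Nat.cast_sum, Nat.cast_one]
  refine Finset.sum_congr rfl fun s hs => ?_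
  simp [Complex.norm_exp, ha s hs]

lemma dirichletPoly_one_sq (t : ℝ) :
    dirichletPoly θ S (fun _ => 1) t ^ 2 =
      dirichletPoly (fun q : ι × ι => θ q.1 + θ q.2) (S ×ˢ S) (fun _ => 1) t := by
  rw [dirichletPoly, dirichletPoly, sq, Finset.sum_mul_sum, Finset.sum_product]
  refine Finset.sum_congr rfl fun s _ => Finset.sum_congr rfl fun u _ => ?_
  rw [one_mul, one_mul, one_mul, ← Complex.exp_add]
  push_cast
  ring_nf

lemma dirichletPoly_mul_conj (b : ι → ℂ) (t : ℝ) :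
    dirichletPoly θ S b t * conj (dirichletPoly θ S b t) =
      ∑ s ∈ S, ∑ u ∈ S, b s * conj (b u) * exp (I * ((θ u - θ s : ℝ) * t)) := by
  rw [dirichletPoly, map_sum, Finset.sum_mul_sum]
  refine Finset.sum_congr rfl fun s _ => Finset.sum_congr rfl fun u _ => ?_
  rw [map_mul, ← Complex.exp_conj, mul_mul_mul_comm, ← Complex.exp_add]
  simp only [map_neg, map_mul, Complex.conj_I, Complex.conj_ofReal]
  push_cast
  ring_nf

theorem tendsto_centeredMean_norm_dirichletPoly_sq (b : ι → ℂ) :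
    Tendsto (centeredMean fun t => ‖dirichletPoly θ S b t‖ ^ 2) atTop
      (𝓝 (∑ s ∈ S, ∑ u ∈ S, if θ s = θ u then (b s * conj (b u)).re else 0)) := by
  have hmean : ∀ R, centeredMean (fun t => ‖dirichletPoly θ S b t‖ ^ 2) R =
      (∑ s ∈ S, ∑ u ∈ S, b s * conj (b u) *
        centeredMean (fun t : ℝ => exp (I * ((θ u - θ s : ℝ) * t))) R).re := by
    intro R
    have hP := continuous_dirichletPoly θ S b
    calc centeredMean (fun t => ‖dirichletPoly θ S b t‖ ^ 2) R
        = centeredMean (fun t => (dirichletPoly θ S b t * conj (dirichletPoly θ S b t)).re) R := by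
          simp_rw [Complex.mul_conj']
          norm_cast
      _ = (centeredMean (fun t => dirichletPoly θ S b t * conj (dirichletPoly θ S b t)) R).re :=
          (re_centeredMean ((hP.mul (Complex.continuous_conj.comp hP)).intervalIntegrable _ _)).symm
      _ = _ := by
          simp_rw [dirichletPoly_mul_conj]
          rw [centeredMean_sum S (f := fun s t => ∑ u ∈ S, b s * conj (b u) *
            exp (I * ((θ u - θ s : ℝ) * t))) fun s _ =>
              Continuous.intervalIntegrable (by fun_prop) _ _]
          congr 1
          refine Finset.sum_congr rfl fun s _ => ?_
          rw [centeredMean_sum S (f := fun u t => b s * conj (b u) *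
            exp (I * ((θ u - θ s : ℝ) * t))) fun u _ =>
              Continuous.intervalIntegrable (by fun_prop) _ _]
          simp_rw [centeredMean_const_mul]
  have hlim := (Complex.continuous_re.tendsto _).comp <| tendsto_finsetSum S fun s _ =>
    tendsto_finsetSum S fun u _ =>
      (tendsto_centeredMean_exp (θ u - θ s)).const_mul (b s * conj (b u))
  convert hlim using 2
  · exact funext hmean
  · simp only [Complex.re_sum, sub_eq_zero, mul_ite, mul_one, mul_zero,
      apply_ite Complex.re, Complex.zero_re]
    exact Finset.sum_congr rfl fun s _ => Finset.sum_congr rfl fun u _ => by simp only [eq_comm]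

theorem tendsto_centeredMean_norm_dirichletPoly_sq_of_injOn (hθ : Set.InjOn θ S) {b : ι → ℂ}
    (hb : ∀ s ∈ S, ‖b s‖ = 1) :
    Tendsto (centeredMean fun t => ‖dirichletPoly θ S b t‖ ^ 2) atTop (𝓝 S.card) := by
  convert tendsto_centeredMean_norm_dirichletPoly_sq θ S b using 2
  rw [Finset.card_eq_sum_ones, Nat.cast_sum]
  refine Finset.sum_congr rfl fun s hs => Eq.symm ?_
  rw [Finset.sum_eq_single_of_mem s hs fun u hu hus => if_neg fun h => hus (hθ hu hs h.symm),
    if_pos rfl, Complex.mul_conj', hb s hs]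
  simp

end dirichletPoly

section PowerMeans

variable {R : ℝ}

lemma memLp_restrict_Ioc_of_continuous {f : ℝ → ℝ} (hf : Continuous f) (a b : ℝ)
    (r : ENNReal) : MemLp f r (volume.restrict (Set.Ioc a b)) := by
  obtain ⟨C, hC⟩ := (isCompact_Icc (a := a) (b := b)).exists_bound_of_continuousOn hf.continuousOn
  refine MemLp.of_bound hf.aestronglyMeasurable.restrict C ?_
  rw [ae_restrict_iff' measurableSet_Ioc]
  exact ae_of_all _ fun t ht => hC t (Set.Ioc_subset_Icc_self ht)

theorem centeredMean_mul_le_of_holderConjugate {f g : ℝ → ℝ} (hf : Continuous f)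
    (hg : Continuous g) (hf0 : ∀ t, 0 ≤ f t) (hg0 : ∀ t, 0 ≤ g t) (hR : 0 < R) {r r' : ℝ}
    (hrr : r.HolderConjugate r') :
    centeredMean (fun t => f t * g t) R ≤
      centeredMean (fun t => f t ^ r) R ^ (1 / r) *
        centeredMean (fun t => g t ^ r') R ^ (1 / r') := by
  have hc : (0 : ℝ) < 1 / (2 * R) := by positivity
  have hholder := integral_mul_le_Lp_mul_Lq_of_nonneg (μ := volume.restrict (Set.Ioc (-R) R)) hrr
    (ae_of_all _ hf0) (ae_of_all _ hg0) (memLp_restrict_Ioc_of_continuous hf _ _ _)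
    (memLp_restrict_Ioc_of_continuous hg _ _ _)
  simp only [centeredMean, smul_eq_mul, intervalIntegral.integral_of_le (neg_le_self hR.le)]
  rw [Real.mul_rpow hc.le (integral_nonneg fun t => Real.rpow_nonneg (hf0 t) r),
    Real.mul_rpow hc.le (integral_nonneg fun t => Real.rpow_nonneg (hg0 t) r'),
    mul_mul_mul_comm, ← Real.rpow_add hc, hrr.one_div_add_one_div, div_one, Real.rpow_one]
  exact mul_le_mul_of_nonneg_left hholder hc.le

theorem centeredMean_rpow_le {g : ℝ → ℝ} (hg : Continuous g) (hg0 : ∀ t, 0 ≤ g t) (hR : 0 < R)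
    {a b : ℝ} (ha : 0 < a) (hab : a ≤ b) :
    centeredMean (fun t => g t ^ a) R ^ (1 / a) ≤ centeredMean (fun t => g t ^ b) R ^ (1 / b) := by
  rcases hab.eq_or_lt with rfl | hlt
  · exact le_rfl
  have hr : (b / a).HolderConjugate (b / a).conjExponent :=
    .conjExponent ((one_lt_div ha).mpr hlt)
  have hholder := centeredMean_mul_le_of_holderConjugate (hg.rpow_const fun _ => .inr ha.le)
    continuous_const (fun t => Real.rpow_nonneg (hg0 t) a) (fun _ => zero_le_one) hR hr
  have hpow : ∀ t, (g t ^ a) ^ (b / a) = g t ^ b := fun t => by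
    rw [← Real.rpow_mul (hg0 t), mul_div_cancel₀ _ ha.ne']
  simp only [mul_one, Real.one_rpow, hpow, centeredMean_const (1 : ℝ) hR.ne'] at hholder
  calc centeredMean (fun t => g t ^ a) R ^ (1 / a)
      ≤ (centeredMean (fun t => g t ^ b) R ^ (1 / (b / a))) ^ (1 / a) :=
        Real.rpow_le_rpow (centeredMean_nonneg (fun t => Real.rpow_nonneg (hg0 t) a) hR.le)
          hholder (by positivity)
    _ = centeredMean (fun t => g t ^ b) R ^ (1 / b) := by
        rw [← Real.rpow_mul (centeredMean_nonneg (fun t => Real.rpow_nonneg (hg0 t) b) hR.le)]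
        congr 1
        field_simp

theorem centeredMean_sq_pow_three_le {g : ℝ → ℝ} (hg : Continuous g) (hg0 : ∀ t, 0 ≤ g t)
    (hR : 0 < R) :
    centeredMean (fun t => g t ^ 2) R ^ 3 ≤
      centeredMean g R ^ 2 * centeredMean (fun t => g t ^ 4) R := by
  have hholder := centeredMean_mul_le_of_holderConjugate
    (hg.rpow_const fun _ => .inr (by norm_num : (0 : ℝ) ≤ 2 / 3))
    (hg.rpow_const fun _ => .inr (by norm_num : (0 : ℝ) ≤ 4 / 3))
    (fun t => Real.rpow_nonneg (hg0 t) _) (fun t => Real.rpow_nonneg (hg0 t) _) hR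
    (Real.holderConjugate_iff.mpr ⟨by norm_num, by norm_num⟩ : (3 / 2 : ℝ).HolderConjugate 3)
  have e2 : ∀ t, g t ^ (2 / 3 : ℝ) * g t ^ (4 / 3 : ℝ) = g t ^ 2 := fun t => by
    rw [← Real.rpow_add' (hg0 t) (by norm_num)]; norm_num
  have e1 : ∀ t, (g t ^ (2 / 3 : ℝ)) ^ (3 / 2 : ℝ) = g t := fun t => by
    rw [← Real.rpow_mul (hg0 t)]; norm_num
  have e4 : ∀ t, (g t ^ (4 / 3 : ℝ)) ^ (3 : ℝ) = g t ^ 4 := fun t => by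
    rw [← Real.rpow_mul (hg0 t)]; norm_num
  simp only [e1, e2, e4] at hholder
  have hX := centeredMean_nonneg hg0 hR.le
  have hZ := centeredMean_nonneg (fun t => pow_nonneg (hg0 t) 4) hR.le
  calc centeredMean (fun t => g t ^ 2) R ^ 3
      ≤ (centeredMean g R ^ (1 / (3 / 2) : ℝ) *
          centeredMean (fun t => g t ^ 4) R ^ (1 / 3 : ℝ)) ^ 3 :=
        pow_le_pow_left₀ (centeredMean_nonneg (fun t => sq_nonneg _) hR.le) hholder 3
    _ = centeredMean g R ^ 2 * centeredMean (fun t => g t ^ 4) R := by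
        rw [mul_pow, ← Real.rpow_mul_natCast hX, ← Real.rpow_mul_natCast hZ]
        norm_num

end PowerMeans

lemma rpow_sub_two_mul_sq_le {x K p : ℝ} (hK : 0 < K) (hx : 0 ≤ x) (hxK : x ≤ K) (hp2 : p ≤ 2) :
    K ^ (p - 2) * x ^ 2 ≤ x ^ p := by
  calc K ^ (p - 2) * x ^ 2 = K ^ (p - 2) * (x ^ (2 - p) * x ^ p) := by
        rw [← Real.rpow_add' hx (by norm_num), sub_add_cancel, Real.rpow_two]
    _ ≤ K ^ (p - 2) * (K ^ (2 - p) * x ^ p) := by gcongr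
    _ = x ^ p := by
        rw [← mul_assoc, ← Real.rpow_add hK, sub_add_sub_cancel, sub_self, Real.rpow_zero, one_mul]

section DirichletMpR

variable {Λ : ℕ → ℝ} {p : ℝ} {A : Finset ℕ} {a : ℕ → ℂ}

lemma dirichletMpR_nonneg {R : ℝ} (hR : 0 ≤ R) : 0 ≤ dirichletMpR Λ p A a R :=
  Real.rpow_nonneg (centeredMean_nonneg (fun _ => Real.rpow_nonneg (norm_nonneg _) p) hR) _

lemma dirichletMpR_le_sqrt (hp0 : 0 < p) (hp2 : p ≤ 2) {R : ℝ} (hR : 0 < R) :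
    dirichletMpR Λ p A a R ≤ √(centeredMean (fun t => ‖dirichletPoly Λ A a t‖ ^ 2) R) := by
  rw [dirichletMpR_eq_centeredMean]
  simpa only [Real.sqrt_eq_rpow, Real.rpow_two] using
    centeredMean_rpow_le (continuous_dirichletPoly Λ A a).norm (fun _ => norm_nonneg _) hR hp0 hp2

lemma isBoundedUnder_le_dirichletMpR (hp0 : 0 < p) (hp2 : p ≤ 2) :
    IsBoundedUnder (· ≤ ·) atTop (dirichletMpR Λ p A a) :=
  (tendsto_centeredMean_norm_dirichletPoly_sq Λ A a).sqrt.isBoundedUnder_le.mono_le <|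
    (eventually_gt_atTop 0).mono fun _ hR => dirichletMpR_le_sqrt hp0 hp2 hR

lemma limsup_dirichletMpR_le_sqrt_card (hΛ : Function.Injective Λ) (hp0 : 0 < p) (hp2 : p ≤ 2)
    (ha : ∀ n ∈ A, ‖a n‖ = 1) :
    limsup (dirichletMpR Λ p A a) atTop ≤ √A.card := by
  have hsqrt := (tendsto_centeredMean_norm_dirichletPoly_sq_of_injOn Λ A hΛ.injOn ha).sqrt
  rw [← hsqrt.limsup_eq]
  exact limsup_le_limsup ((eventually_gt_atTop 0).mono fun _ hR => dirichletMpR_le_sqrt hp0 hp2 hR)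
    (isCoboundedUnder_le_of_eventually_le _ <|
      (eventually_ge_atTop 0).mono fun _ hR => dirichletMpR_nonneg hR)
    hsqrt.isBoundedUnder_le

lemma card_rpow_le_liminf_dirichletMpR (hΛ : Function.Injective Λ) (hp0 : 0 < p) (hp2 : p ≤ 2)
    (ha : ∀ n ∈ A, ‖a n‖ = 1) (hA : A.Nonempty) :
    (A.card : ℝ) ^ (1 - 1 / p) ≤ liminf (dirichletMpR Λ p A a) atTop := by
  set K : ℝ := (A.card : ℝ)
  have hK : 0 < K := Nat.cast_pos.mpr hA.card_pos
  have hlim : Tendsto (fun R => (K ^ (p - 2) *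
      centeredMean (fun t => ‖dirichletPoly Λ A a t‖ ^ 2) R) ^ (1 / p)) atTop
      (𝓝 (K ^ (1 - 1 / p))) := by
    have h := ((tendsto_centeredMean_norm_dirichletPoly_sq_of_injOn Λ A hΛ.injOn ha).const_mul
      (K ^ (p - 2))).rpow_const (p := 1 / p) (.inl (by positivity))
    convert h using 2
    rw [← Real.rpow_add_one hK.ne', ← Real.rpow_mul hK.le]
    congr 1
    field_simp
    ring
  have hle : ∀ R > 0, (K ^ (p - 2) *
      centeredMean (fun t => ‖dirichletPoly Λ A a t‖ ^ 2) R) ^ (1 / p) ≤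
        dirichletMpR Λ p A a R := by
    intro R hR
    have hP := (continuous_dirichletPoly Λ A a).norm
    refine Real.rpow_le_rpow (mul_nonneg (by positivity)
      (centeredMean_nonneg (fun _ => sq_nonneg _) hR.le)) ?_ (by positivity)
    rw [← centeredMean_const_mul]
    refine centeredMean_mono hR.le ((continuous_const.mul (hP.pow 2)).intervalIntegrable _ _)
      ((hP.rpow_const fun _ => .inr hp0.le).intervalIntegrable _ _) fun t => ?_
    exact rpow_sub_two_mul_sq_le hK (norm_nonneg _) (norm_dirichletPoly_le_card Λ A ha t) hp2
  rw [← hlim.liminf_eq]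
  exact liminf_le_liminf ((eventually_gt_atTop 0).mono hle) hlim.isBoundedUnder_ge
    (isBoundedUnder_le_dirichletMpR hp0 hp2).isCoboundedUnder_ge

end DirichletMpR

def IsLacunary (μ : ℕ → ℝ) : Prop :=
  0 < μ 0 ∧ ∀ k, 2 * μ k < μ (k + 1)

lemma exists_isLacunary_comp {Λ : ℕ → ℝ} (hΛ : Tendsto Λ atTop atTop) :
    ∃ n : ℕ → ℕ, IsLacunary (Λ ∘ n) := by
  choose F hF using fun x : ℝ => (hΛ.eventually_gt_atTop x).exists
  exact ⟨fun k => Nat.rec (motive := fun _ => ℕ) (F 1) (fun _ m => F (2 * Λ m)) k,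
    one_pos.trans (hF 1), fun k => hF _⟩

namespace IsLacunary

variable {μ : ℕ → ℝ} (hμ : IsLacunary μ)
include hμ

lemma pos (k : ℕ) : 0 < μ k := by
  induction k with
  | zero => exact hμ.1
  | succ k ih => linarith [hμ.2 k]

lemma strictMono : StrictMono μ :=
  strictMono_nat_of_lt_succ fun k => by linarith [hμ.2 k, hμ.pos k]

lemma add_lt_add_of_max_lt {a b c d : ℕ} (h : max a b < max c d) : μ a + μ b < μ c + μ d := by
  obtain ⟨m, hm⟩ : ∃ m, max c d = m + 1 := ⟨max c d - 1, by omega⟩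
  have hab : μ a + μ b ≤ 2 * μ m := by
    linarith [hμ.strictMono.monotone (show a ≤ m by omega),
      hμ.strictMono.monotone (show b ≤ m by omega)]
  have hcd : μ (max c d) ≤ μ c + μ d := by
    rcases le_total c d with h | h
    · rw [max_eq_right h]; linarith [hμ.pos c]
    · rw [max_eq_left h]; linarith [hμ.pos d]
  rw [hm] at hcd
  linarith [hμ.2 m]

lemma eq_and_eq_or_eq_and_eq_of_add_eq_add {a b c d : ℕ} (h : μ a + μ b = μ c + μ d) :
    (a = c ∧ b = d) ∨ (a = d ∧ b = c) := by
  have hmax : max a b = max c d := by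
    by_contra hne
    rcases lt_or_gt_of_ne hne with hlt | hlt
    · exact (hμ.add_lt_add_of_max_lt hlt).ne h
    · exact (hμ.add_lt_add_of_max_lt hlt).ne' h
  have hmin : μ (min a b) = μ (min c d) := by
    have h1 := min_add_max (μ a) (μ b)
    have h2 := min_add_max (μ c) (μ d)
    rw [← hμ.strictMono.monotone.map_max, ← hμ.strictMono.monotone.map_min] at h1
    rw [← hμ.strictMono.monotone.map_max, ← hμ.strictMono.monotone.map_min] at h2
    rw [hmax] at h1
    linarith
  have := hμ.strictMono.injective hmin
  omega

lemma sum_ite_add_eq_add_le (S : Finset ℕ) :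
    ∑ s ∈ S ×ˢ S, ∑ u ∈ S ×ˢ S, (if μ s.1 + μ s.2 = μ u.1 + μ u.2 then (1 : ℝ) else 0) ≤
      2 * S.card ^ 2 := by
  have hrow : ∀ s ∈ S ×ˢ S,
      ∑ u ∈ S ×ˢ S, (if μ s.1 + μ s.2 = μ u.1 + μ u.2 then (1 : ℝ) else 0) ≤ 2 := by
    intro s _
    rw [Finset.sum_boole]
    have hsub : {u ∈ S ×ˢ S | μ s.1 + μ s.2 = μ u.1 + μ u.2} ⊆ {(s.1, s.2), (s.2, s.1)} := by
      intro u hu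
      rcases hμ.eq_and_eq_or_eq_and_eq_of_add_eq_add (Finset.mem_filter.mp hu).2 with
        ⟨h1, h2⟩ | ⟨h1, h2⟩ <;> simp [Prod.ext_iff, h1, h2]
    exact_mod_cast (Finset.card_le_card hsub).trans Finset.card_le_two
  calc _ ≤ ∑ _s ∈ S ×ˢ S, (2 : ℝ) := Finset.sum_le_sum hrow
    _ = 2 * S.card ^ 2 := by simp [Finset.card_product, sq, mul_comm]

lemma eventually_centeredMean_pow_four_le {N : ℕ} (hN : N ≠ 0) :
    ∀ᶠ R in atTop,
      centeredMean (fun t => ‖dirichletPoly μ (range N) (fun _ => 1) t‖ ^ 4) R ≤ 3 * N ^ 2 := by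
  have hsq : ∀ t, ‖dirichletPoly μ (range N) (fun _ => 1) t‖ ^ 4 =
      ‖dirichletPoly (fun q : ℕ × ℕ => μ q.1 + μ q.2) (range N ×ˢ range N) (fun _ => 1) t‖ ^ 2 := by
    intro t
    rw [← dirichletPoly_one_sq, norm_pow, ← pow_mul]
  simp_rw [hsq]
  refine (tendsto_centeredMean_norm_dirichletPoly_sq _ _ _).eventually_le_const ?_
  have hcount := hμ.sum_ite_add_eq_add_le (range N)
  have hN' : (0 : ℝ) < N := Nat.cast_pos.mpr (Nat.pos_of_ne_zero hN)
  simp only [map_one, mul_one, Complex.one_re, card_range] at hcount ⊢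
  nlinarith

theorem sqrt_le_liminf_dirichletMpR {p : ℝ} (hp1 : 1 ≤ p) (hp2 : p ≤ 2) {N : ℕ} (hN : N ≠ 0) :
    3 / 8 * √N ≤ liminf (dirichletMpR μ p (range N) fun _ => 1) atTop := by
  set g : ℝ → ℝ := fun t => ‖dirichletPoly μ (range N) (fun _ => 1) t‖
  have hg : Continuous g := (continuous_dirichletPoly _ _ _).norm
  have hg0 : ∀ t, 0 ≤ g t := fun _ => norm_nonneg _
  have hN' : (0 : ℝ) < N := Nat.cast_pos.mpr (Nat.pos_of_ne_zero hN)
  have hY : Tendsto (centeredMean fun t => g t ^ 2) atTop (𝓝 N) := by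
    simpa using tendsto_centeredMean_norm_dirichletPoly_sq_of_injOn μ (range N)
      hμ.strictMono.injective.injOn (b := fun _ => 1) fun _ _ => norm_one
  refine le_liminf_of_le (isBoundedUnder_le_dirichletMpR (by linarith) hp2).isCoboundedUnder_ge ?_
  filter_upwards [eventually_gt_atTop 0, hY.eventually_const_le (by linarith : 3 / 4 * (N : ℝ) < N),
    hμ.eventually_centeredMean_pow_four_le hN] with R hR hYR hZR
  set X := centeredMean g R
  have hX : 0 ≤ X := centeredMean_nonneg hg0 hR.le
  have hX2 : 9 / 64 * (N : ℝ) ≤ X ^ 2 := by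
    have hholder := centeredMean_sq_pow_three_le hg hg0 hR
    have hY3 := pow_le_pow_left₀ (by positivity) hYR 3
    refine le_of_mul_le_mul_right ?_ (by positivity : (0 : ℝ) < 3 * N ^ 2)
    nlinarith [mul_le_mul_of_nonneg_left hZR (sq_nonneg X)]
  calc 3 / 8 * √N ≤ X := by
        refine le_of_pow_le_pow_left₀ two_ne_zero hX ?_
        rw [mul_pow, Real.sq_sqrt hN'.le]
        linarith
    _ ≤ dirichletMpR μ p (range N) (fun _ => 1) R := by
        have h := centeredMean_rpow_le hg hg0 hR one_pos hp1
        simp only [Real.rpow_one, div_one] at h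
        exact h

end IsLacunary

lemma dirichletMpR_image {Λ : ℕ → ℝ} {p : ℝ} {S : Finset ℕ} {n : ℕ → ℕ} (hn : Set.InjOn n S)
    (a : ℕ → ℂ) : dirichletMpR Λ p (S.image n) a = dirichletMpR (Λ ∘ n) p S (a ∘ n) := by
  ext R
  simp only [dirichletMpR, Finset.sum_image hn, Function.comp_apply]

theorem fundamental_functions_Hp_general_le_two_general (Λ : ℕ → ℝ) (hmono : StrictMono Λ)
    (hunb : Tendsto Λ atTop atTop)
    (p : ℝ) (hp1 : 1 < p) (hp2 : p ≤ 2) :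
    ∃ c C c' C' : ℝ, 0 < c ∧ 0 < C ∧ 0 < c' ∧ 0 < C' ∧ ∀ N : ℕ, 1 ≤ N →
      ((∀ (A : Finset ℕ) (ε : ℕ → ℂ), N ≤ A.card → (∀ n ∈ A, ‖ε n‖ = 1) →
          c * (N : ℝ) ^ (1 - 1 / p) ≤ liminf (dirichletMpR Λ p A ε) atTop) ∧
        (∃ A : Finset ℕ, N ≤ A.card ∧
          limsup (dirichletMpR Λ p A fun _ => 1) atTop ≤ C * Real.sqrt N) ∧
        (∀ (A : Finset ℕ) (ε : ℕ → ℂ), A.card ≤ N → (∀ n ∈ A, ‖ε n‖ = 1) →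
          limsup (dirichletMpR Λ p A ε) atTop ≤ C' * Real.sqrt N) ∧
        (∃ A : Finset ℕ, A.card ≤ N ∧
          c' * Real.sqrt N ≤ liminf (dirichletMpR Λ p A fun _ => 1) atTop)) := by
  have hp0 : 0 < p := one_pos.trans hp1
  obtain ⟨n, hn⟩ := exists_isLacunary_comp hunb
  refine ⟨1, 1, 3 / 8, 1, one_pos, one_pos, by norm_num, one_pos, fun N hN => ⟨?_, ?_, ?_, ?_⟩⟩
  · intro A ε hA hε
    rw [one_mul]
    refine le_trans ?_ (card_rpow_le_liminf_dirichletMpR hmono.injective hp0 hp2 hε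
      (Finset.card_pos.mp (hN.trans hA)))
    exact Real.rpow_le_rpow (Nat.cast_nonneg _) (by exact_mod_cast hA)
      (sub_nonneg.mpr ((div_le_one hp0).mpr hp1.le))
  · refine ⟨range N, (card_range N).ge, ?_⟩
    simpa using limsup_dirichletMpR_le_sqrt_card (A := range N) hmono.injective hp0 hp2
      fun _ _ => norm_one
  · intro A ε hA hε
    rw [one_mul]
    exact (limsup_dirichletMpR_le_sqrt_card hmono.injective hp0 hp2 hε).trans
      (Real.sqrt_le_sqrt (by exact_mod_cast hA))
  · refine ⟨(range N).image n, card_image_le.trans (card_range N).le, ?_⟩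
    have hinj : Set.InjOn n (range N) := (hn.strictMono.injective.of_comp).injOn
    rw [dirichletMpR_image hinj]
    exact hn.sqrt_le_liminf_dirichletMpR hp1.le hp2 (by omega)

/-- Fundamental functions of the canonical basis of `H_p^λ`, `1 < p ≤ 2`, for an arbitrary
frequency `λ`.  Here `1/p' = 1 - 1/p`. -/
theorem fundamental_functions_Hp_general_le_two (Λ : ℕ → ℝ) (hmono : StrictMono Λ)
    (hpos : ∀ n, 0 ≤ Λ n) (hunb : Tendsto Λ atTop atTop)
    (p : ℝ) (hp1 : 1 < p) (hp2 : p ≤ 2) :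
    ∃ c C c' C' : ℝ, 0 < c ∧ 0 < C ∧ 0 < c' ∧ 0 < C' ∧ ∀ N : ℕ, 1 ≤ N →
      ((∀ (A : Finset ℕ) (ε : ℕ → ℂ), N ≤ A.card → (∀ n ∈ A, ‖ε n‖ = 1) →
          c * (N : ℝ) ^ (1 - 1 / p) ≤ liminf (dirichletMpR Λ p A ε) atTop) ∧
        (∃ A : Finset ℕ, N ≤ A.card ∧
          limsup (dirichletMpR Λ p A fun _ => 1) atTop ≤ C * Real.sqrt N) ∧
        (∀ (A : Finset ℕ) (ε : ℕ → ℂ), A.card ≤ N → (∀ n ∈ A, ‖ε n‖ = 1) →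
          limsup (dirichletMpR Λ p A ε) atTop ≤ C' * Real.sqrt N) ∧
        (∃ A : Finset ℕ, A.card ≤ N ∧
          c' * Real.sqrt N ≤ liminf (dirichletMpR Λ p A fun _ => 1) atTop)) :=
  fundamental_functions_Hp_general_le_two_general Λ hmono hunb p hp1 hp2
end

section
/- Let λ be any frequency and fix 2 < p < ∞. There exist constants c, C, c', C' > 0 such that for every integer N ≥ 1: (i) for every finite A ⊆ ℕ with |A| ≥ N and every unimodular (ε_n)_{n∈A}, liminf_{R→∞} M_{p,R}((ε_n)) ≥ c·N^{1/2}; (ii) there exists a finite A with |A| ≥ N such that limsup_{R→∞} M_{p,R}((1)_{n∈A}) ≤ C·N^{1/2}; (iii) for every finite A with |A| ≤ N and every unimodular (ε_n), limsup_{R→∞} M_{p,R}((ε_n)) ≤ C'·N^{1/p'}; and (iv) there exists a finite A with |A| ≤ N such that liminf_{R→∞} M_{p,R}((1)_{n∈A}) ≥ c'·N^{1/2}. -/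
open MeasureTheory Filter Finset

/-!
Averaging `|∑_{n∈A} a_n e^{-iλ_n t}|²` over `[-R, R]` kills every off-diagonal term as `R → ∞`, so
for unimodular coefficients the `L²`-mean tends to `|A|`. Since `L^p`-means increase with `p` and
the polynomial is bounded by `|A|`, this gives the lower bound `√|A|` and, through
`|f|^p ≤ |A|^{p-2} |f|²`, the upper bound `|A|^{1-1/p}`. For the bound `C √N` choose `2k ≥ p` and a
set `A` of size `N` on which every `λ_n` exceeds `k` times the sum of the smaller ones: the
`2k`-th moment counts the solutions of `λ_{ν₁} + ⋯ + λ_{ν_k} = λ_{μ₁} + ⋯ + λ_{μ_k}`, and on such a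
set these are only the rearrangements, at most `k! N^k` of them.
-/

open scoped Topology ComplexConjugate

namespace GeneralDirichlet

section CenteredMean

variable {E : Type*} [NormedAddCommGroup E] [NormedSpace ℝ E]

noncomputable def centeredMean (R : ℝ) (f : ℝ → E) : E :=
  (1 / (2 * R)) • ∫ t in (-R)..R, f t

theorem centeredMean_const [CompleteSpace E] {R : ℝ} (hR : R ≠ 0) (c : E) :
    centeredMean R (fun _ => c) = c := by
  rw [centeredMean, intervalIntegral.integral_const, smul_smul]
  convert one_smul ℝ c using 2
  field_simp
  ring

theorem centeredMean_finsetSum {ι : Type*} (S : Finset ι) {f : ι → ℝ → E}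
    (hf : ∀ j ∈ S, Continuous (f j)) (R : ℝ) :
    centeredMean R (fun t => ∑ j ∈ S, f j t) = ∑ j ∈ S, centeredMean R (f j) := by
  rw [centeredMean, intervalIntegral.integral_finsetSum
    fun j hj => (hf j hj).intervalIntegrable _ _, Finset.smul_sum]
  rfl

theorem re_centeredMean {f : ℝ → ℂ} (hf : Continuous f) (R : ℝ) :
    (centeredMean R f).re = centeredMean R fun t => (f t).re := by
  rw [centeredMean, Complex.smul_re]
  exact congrArg _ (intervalIntegral.intervalIntegral_re (hf.intervalIntegrable _ _)).symm

theorem centeredMean_nonneg {R : ℝ} (hR : 0 ≤ R) {f : ℝ → ℝ} (hf : ∀ t, 0 ≤ f t) :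
    0 ≤ centeredMean R f :=
  smul_nonneg (by positivity) (intervalIntegral.integral_nonneg (by linarith) fun t _ => hf t)

theorem centeredMean_mono {R : ℝ} (hR : 0 ≤ R) {f g : ℝ → ℝ} (hf : Continuous f)
    (hg : Continuous g) (hfg : ∀ t, f t ≤ g t) : centeredMean R f ≤ centeredMean R g :=
  smul_le_smul_of_nonneg_left (intervalIntegral.integral_mono_on (by linarith)
    (hf.intervalIntegrable _ _) (hg.intervalIntegrable _ _) fun t _ => hfg t) (by positivity)

theorem centeredMean_const_mul {𝕜 : Type*} [RCLike 𝕜] (R : ℝ) (c : 𝕜) (f : ℝ → 𝕜) :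
    centeredMean R (fun t => c * f t) = c * centeredMean R f := by
  simp only [centeredMean, intervalIntegral.integral_const_mul, mul_smul_comm]

theorem tendsto_centeredMean_exp_mul_I (φ : ℝ) :
    Tendsto (fun R => centeredMean R fun t => Complex.exp (Complex.I * (φ * t))) atTop
      (𝓝 (if φ = 0 then 1 else 0)) := by
  split_ifs with hφ
  · refine tendsto_const_nhds.congr' ?_
    filter_upwards [eventually_gt_atTop 0] with R hR
    simp [hφ, centeredMean_const hR.ne']
  · have hc : Complex.I * φ ≠ 0 := mul_ne_zero Complex.I_ne_zero (by exact_mod_cast hφ)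
    have hbound : ∀ᶠ R in atTop,
        ‖centeredMean R fun t => Complex.exp (Complex.I * (φ * t))‖ ≤ |φ|⁻¹ * R⁻¹ := by
      filter_upwards [eventually_gt_atTop 0] with R hR
      have hint : ∫ t in (-R)..R, Complex.exp (Complex.I * (φ * t))
          = (Complex.exp (Complex.I * φ * R) - Complex.exp (Complex.I * φ * (-R : ℝ))) /
            (Complex.I * φ) := by
        simp_rw [← mul_assoc]
        exact integral_exp_mul_complex hc
      have hexp : ∀ x : ℝ, ‖Complex.exp (Complex.I * φ * x)‖ = 1 := fun x => by
        rw [Complex.norm_exp]; simp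
      rw [centeredMean, hint, norm_smul, norm_div _ (Complex.I * φ), norm_mul Complex.I,
        Complex.norm_I, one_mul, Complex.norm_real, Real.norm_eq_abs, Real.norm_eq_abs,
        abs_of_pos (by positivity : (0:ℝ) < 1 / (2 * R))]
      calc 1 / (2 * R) * (‖Complex.exp (Complex.I * φ * R) -
              Complex.exp (Complex.I * φ * (-R : ℝ))‖ / |φ|)
          ≤ 1 / (2 * R) * (2 / |φ|) := by
            gcongr
            exact (norm_sub_le _ _).trans (by rw [hexp, hexp]; norm_num)
        _ = |φ|⁻¹ * R⁻¹ := by field_simp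
    exact squeeze_zero_norm' hbound (by simpa using tendsto_inv_atTop_zero.const_mul |φ|⁻¹)

theorem rpow_centeredMean_le {R : ℝ} (hR : 0 < R) {f : ℝ → ℝ} (hf : Continuous f)
    (hf0 : ∀ t, 0 ≤ f t) {s : ℝ} (hs : 1 ≤ s) :
    centeredMean R f ^ s ≤ centeredMean R fun t => f t ^ s := by
  have hmean : ∀ g : ℝ → ℝ, centeredMean R g = ⨍ t in Set.Ioc (-R) R, g t := fun g => by
    rw [setAverage_eq, Real.volume_real_Ioc_of_le (by linarith),
      centeredMean, intervalIntegral.integral_of_le (by linarith)]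
    congr 1
    ring
  have : IsFiniteMeasure (volume.restrict (Set.Ioc (-R) R)) := by
    rw [isFiniteMeasure_restrict]; simp
  have : NeZero (volume.restrict (Set.Ioc (-R) R)) := by
    rw [neZero_iff, Ne, Measure.restrict_eq_zero, Real.volume_Ioc]
    simpa only [sub_neg_eq_add, ENNReal.ofReal_eq_zero, add_self_nonpos_iff, not_le] using hR
  rw [hmean, hmean]
  exact (convexOn_rpow hs).map_average_le
    (fun x _ => (Real.continuousAt_rpow_const x s (Or.inr (by linarith))).continuousWithinAt)
    isClosed_Ici (.of_forall hf0) hf.integrableOn_Ioc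
    (hf.rpow_const fun _ => Or.inr (by linarith)).integrableOn_Ioc

end CenteredMean

section ExpSum

/-- The exponential polynomial `∑_{j∈S} c_j e^{-θ_j s}` at `s = it`. -/
noncomputable def expSum {ι : Type*} (S : Finset ι) (c : ι → ℂ) (θ : ι → ℝ) (t : ℝ) : ℂ :=
  ∑ j ∈ S, c j * Complex.exp (-(Complex.I * (θ j * t)))

variable {ι : Type*} (S : Finset ι) (c : ι → ℂ) (θ : ι → ℝ)

@[fun_prop]
theorem continuous_expSum : Continuous (expSum S c θ) := by
  unfold expSum; fun_prop

theorem norm_expSum_le_card (hc : ∀ j ∈ S, ‖c j‖ ≤ 1) (t : ℝ) : ‖expSum S c θ t‖ ≤ #S :=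
  (norm_sum_le _ _).trans <| (Finset.sum_le_card_nsmul _ _ 1 fun j hj => by
    rw [norm_mul, Complex.norm_exp]
    simpa using hc j hj).trans (by simp)

theorem expSum_pow (k : ℕ) (t : ℝ) :
    expSum S c θ t ^ k = expSum (Fintype.piFinset fun _ : Fin k => S) (fun ν => ∏ i, c (ν i))
      (fun ν => ∑ i, θ (ν i)) t := by
  rw [← Fin.prod_const, expSum, Finset.prod_univ_sum]
  refine Finset.sum_congr rfl fun ν _ => ?_
  rw [Finset.prod_mul_distrib, ← Complex.exp_sum]
  push_cast
  simp only [Finset.sum_mul, Finset.mul_sum, Finset.sum_neg_distrib]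

theorem tendsto_centeredMean_norm_expSum_sq :
    Tendsto (fun R => centeredMean R fun t => ‖expSum S c θ t‖ ^ 2) atTop
      (𝓝 (∑ q ∈ S ×ˢ S with θ q.1 = θ q.2, c q.1 * conj (c q.2)).re) := by
  have hsq : ∀ t, ‖expSum S c θ t‖ ^ 2 = (∑ q ∈ S ×ˢ S,
      c q.1 * conj (c q.2) * Complex.exp (Complex.I * ((θ q.2 - θ q.1 : ℝ) * t))).re := by
    intro t
    rw [← Complex.ofReal_re (‖_‖ ^ 2), Complex.ofReal_pow, ← Complex.mul_conj', expSum, map_sum,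
      Finset.sum_mul_sum, ← Finset.sum_product']
    refine congrArg _ (Finset.sum_congr rfl fun q _ => ?_)
    rw [map_mul, ← Complex.exp_conj, mul_mul_mul_comm, ← Complex.exp_add]
    congr 2
    simp only [map_neg, map_mul, Complex.conj_I, Complex.conj_ofReal, Complex.ofReal_sub]
    ring
  simp_rw [hsq]
  have hcont : ∀ q : ι × ι, Continuous fun t : ℝ =>
      c q.1 * conj (c q.2) * Complex.exp (Complex.I * ((θ q.2 - θ q.1 : ℝ) * t)) :=
    fun q => by fun_prop
  have hmean : ∀ R, (centeredMean R fun t => (∑ q ∈ S ×ˢ S,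
      c q.1 * conj (c q.2) * Complex.exp (Complex.I * ((θ q.2 - θ q.1 : ℝ) * t))).re) =
      (∑ q ∈ S ×ˢ S, c q.1 * conj (c q.2) *
        centeredMean R fun t => Complex.exp (Complex.I * ((θ q.2 - θ q.1 : ℝ) * t))).re := by
    intro R
    rw [← re_centeredMean (continuous_finsetSum _ fun q _ => hcont q),
      centeredMean_finsetSum _ fun q _ => hcont q]
    simp only [centeredMean_const_mul]
  simp_rw [hmean]
  refine (Complex.continuous_re.tendsto _).comp ?_
  rw [Finset.sum_filter]
  refine tendsto_finsetSum _ fun q _ => ?_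
  convert (tendsto_centeredMean_exp_mul_I (θ q.2 - θ q.1)).const_mul (c q.1 * conj (c q.2)) using 2
  simp [sub_eq_zero, eq_comm]

end ExpSum

section PowerMeans

variable {R : ℝ} {F : ℝ → ℝ}

theorem rpow_centeredMean_rpow_le (hR : 0 < R) (hF : Continuous F) (hF0 : ∀ t, 0 ≤ F t)
    {q₁ q₂ : ℝ} (hq₁ : 0 < q₁) (hq : q₁ ≤ q₂) :
    (centeredMean R fun t => F t ^ q₁) ^ (1 / q₁) ≤
      (centeredMean R fun t => F t ^ q₂) ^ (1 / q₂) := by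
  have hq₂ : 0 < q₂ := hq₁.trans_le hq
  have hmean := centeredMean_nonneg hR.le fun t => Real.rpow_nonneg (hF0 t) q₁
  have hjensen := rpow_centeredMean_le hR (hF.rpow_const fun _ => Or.inr hq₁.le)
    (fun t => Real.rpow_nonneg (hF0 t) q₁) ((one_le_div hq₁).mpr hq)
  simp only [← Real.rpow_mul (hF0 _), mul_div_cancel₀ _ hq₁.ne'] at hjensen
  calc (centeredMean R fun t => F t ^ q₁) ^ (1 / q₁)
      = ((centeredMean R fun t => F t ^ q₁) ^ (q₂ / q₁)) ^ (1 / q₂) := by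
        rw [← Real.rpow_mul hmean]
        field_simp
    _ ≤ (centeredMean R fun t => F t ^ q₂) ^ (1 / q₂) := by gcongr

theorem centeredMean_rpow_le_mul (hR : 0 ≤ R) (hF : Continuous F) (hF0 : ∀ t, 0 ≤ F t)
    {B : ℝ} (hFB : ∀ t, F t ≤ B) {p q : ℝ} (hq : 0 < q) (hqp : q ≤ p) :
    (centeredMean R fun t => F t ^ p) ≤ B ^ (p - q) * centeredMean R fun t => F t ^ q := by
  rw [← centeredMean_const_mul]
  refine centeredMean_mono hR (hF.rpow_const fun _ => Or.inr (hq.le.trans hqp))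
    (continuous_const.mul (hF.rpow_const fun _ => Or.inr hq.le)) fun t => ?_
  calc F t ^ p = F t ^ (p - q) * F t ^ q := by
        rw [← Real.rpow_add' (hF0 t) (by linarith), sub_add_cancel]
    _ ≤ B ^ (p - q) * F t ^ q := mul_le_mul_of_nonneg_right
        (Real.rpow_le_rpow (hF0 t) (hFB t) (by linarith)) (Real.rpow_nonneg (hF0 t) q)

end PowerMeans

section DirichletPolynomial

variable (Λ : ℕ → ℝ) (A : Finset ℕ) (a : ℕ → ℂ)

theorem dirichletMpR_eq (p R : ℝ) :
    dirichletMpR Λ p A a R = (centeredMean R fun t => ‖expSum A a Λ t‖ ^ p) ^ (1 / p) :=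
  rfl

theorem dirichletMpR_nonneg {R : ℝ} (hR : 0 ≤ R) (p : ℝ) : 0 ≤ dirichletMpR Λ p A a R :=
  Real.rpow_nonneg (centeredMean_nonneg hR fun _ => by positivity) _

theorem dirichletMpR_le_dirichletMpR {q₁ q₂ : ℝ} (hq₁ : 0 < q₁) (hq : q₁ ≤ q₂) {R : ℝ}
    (hR : 0 < R) : dirichletMpR Λ q₁ A a R ≤ dirichletMpR Λ q₂ A a R :=
  rpow_centeredMean_rpow_le hR (by fun_prop) (fun _ => norm_nonneg _) hq₁ hq

variable {A a}

theorem dirichletMpR_le_card (ha : ∀ n ∈ A, ‖a n‖ ≤ 1) {p : ℝ} (hp : 0 < p) {R : ℝ}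
    (hR : 0 < R) : dirichletMpR Λ p A a R ≤ #A := by
  have hmean : (centeredMean R fun t => ‖expSum A a Λ t‖ ^ p) ≤ (#A : ℝ) ^ p := by
    rw [← centeredMean_const hR.ne' ((#A : ℝ) ^ p)]
    exact centeredMean_mono hR.le ((continuous_expSum A a Λ).norm.rpow_const fun _ => Or.inr hp.le)
      continuous_const fun t =>
      Real.rpow_le_rpow (norm_nonneg _) (norm_expSum_le_card A a Λ ha t) hp.le
  calc dirichletMpR Λ p A a R ≤ ((#A : ℝ) ^ p) ^ (1 / p) :=
        Real.rpow_le_rpow (centeredMean_nonneg hR.le fun _ => by positivity) hmean (by positivity)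
    _ = #A := by rw [← Real.rpow_mul (Nat.cast_nonneg _), mul_one_div_cancel hp.ne', Real.rpow_one]

theorem tendsto_centeredMean_norm_expSum_sq_of_injective (hΛ : Function.Injective Λ)
    (ha : ∀ n ∈ A, ‖a n‖ = 1) :
    Tendsto (fun R => centeredMean R fun t => ‖expSum A a Λ t‖ ^ 2) atTop (𝓝 #A) := by
  convert tendsto_centeredMean_norm_expSum_sq A a Λ
  have hdiag : {q ∈ A ×ˢ A | Λ q.1 = Λ q.2} = A.diag := by
    ext ⟨m, n⟩
    simp only [Finset.mem_filter, Finset.mem_product, Finset.mem_diag, hΛ.eq_iff]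
    constructor
    · rintro ⟨⟨hm, -⟩, rfl⟩; exact ⟨hm, rfl⟩
    · rintro ⟨hm, rfl⟩; exact ⟨⟨hm, hm⟩, rfl⟩
  have hunit : ∀ n ∈ A, a n * conj (a n) = 1 := fun n hn => by
    rw [Complex.mul_conj', ha n hn]; norm_num
  rw [hdiag, Finset.sum_diag, Finset.sum_congr rfl hunit]
  simp

theorem sqrt_card_le_liminf_dirichletMpR (hΛ : Function.Injective Λ) (ha : ∀ n ∈ A, ‖a n‖ = 1)
    {p : ℝ} (hp : 2 ≤ p) : √(#A : ℝ) ≤ liminf (dirichletMpR Λ p A a) atTop := by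
  have htwo : Tendsto (dirichletMpR Λ 2 A a) atTop (𝓝 √(#A : ℝ)) := by
    show Tendsto (fun R => (centeredMean R fun t => ‖expSum A a Λ t‖ ^ (2 : ℝ)) ^ (1 / (2 : ℝ)))
      atTop _
    simp only [Real.rpow_two, Real.sqrt_eq_rpow]
    exact ((Real.continuousAt_rpow_const _ _ (Or.inr (by norm_num))).tendsto).comp
      (tendsto_centeredMean_norm_expSum_sq_of_injective Λ hΛ ha)
  have hbdd : IsCoboundedUnder (· ≥ ·) atTop (dirichletMpR Λ p A a) :=
    isCoboundedUnder_ge_of_eventually_le atTop <| (eventually_gt_atTop 0).mono fun R hR =>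
      dirichletMpR_le_card Λ (fun n hn => (ha n hn).le) (by linarith) hR
  rw [← htwo.liminf_eq]
  exact liminf_le_liminf ((eventually_gt_atTop 0).mono fun R hR =>
    dirichletMpR_le_dirichletMpR Λ A a two_pos hp hR) htwo.isBoundedUnder_ge hbdd

theorem limsup_dirichletMpR_le_card_rpow (hΛ : Function.Injective Λ) (ha : ∀ n ∈ A, ‖a n‖ = 1)
    {p : ℝ} (hp : 2 ≤ p) : limsup (dirichletMpR Λ p A a) atTop ≤ (#A : ℝ) ^ (1 - 1 / p) := by
  have hlim : Tendsto (fun R => ((#A : ℝ) ^ (p - 2) *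
      centeredMean R fun t => ‖expSum A a Λ t‖ ^ 2) ^ (1 / p)) atTop
      (𝓝 ((#A : ℝ) ^ (1 - 1 / p))) := by
    have : (#A : ℝ) ^ (1 - 1 / p) = ((#A : ℝ) ^ (p - 2) * #A) ^ (1 / p) := by
      rw [← Real.rpow_add_one' (Nat.cast_nonneg _) (by linarith),
        ← Real.rpow_mul (Nat.cast_nonneg _)]
      congr 1
      field_simp
      ring
    rw [this]
    exact ((Real.continuousAt_rpow_const _ _ (Or.inr (by positivity))).tendsto).comp
      ((tendsto_centeredMean_norm_expSum_sq_of_injective Λ hΛ ha).const_mul _)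
  have hle : ∀ᶠ R in atTop, dirichletMpR Λ p A a R ≤ ((#A : ℝ) ^ (p - 2) *
      centeredMean R fun t => ‖expSum A a Λ t‖ ^ 2) ^ (1 / p) := by
    filter_upwards [eventually_gt_atTop 0] with R hR
    rw [dirichletMpR_eq]
    refine Real.rpow_le_rpow (centeredMean_nonneg hR.le fun _ => by positivity) ?_ (by positivity)
    simpa only [Real.rpow_two] using centeredMean_rpow_le_mul hR.le (by fun_prop)
      (fun _ => norm_nonneg _) (norm_expSum_le_card A a Λ fun n hn => (ha n hn).le) two_pos hp
  have hbdd : IsCoboundedUnder (· ≤ ·) atTop (dirichletMpR Λ p A a) :=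
    isCoboundedUnder_le_of_eventually_le atTop <| (eventually_ge_atTop 0).mono fun R hR =>
      dirichletMpR_nonneg Λ A a hR p
  exact (limsup_le_limsup hle hbdd hlim.isBoundedUnder_le).trans_eq hlim.limsup_eq

end DirichletPolynomial

section Superincreasing

theorem exists_perm_comp_eq_of_card_fiber_eq {ι α : Type*} [Fintype ι] [DecidableEq α]
    {ν μ : ι → α} (h : ∀ c, #{i | ν i = c} = #{i | μ i = c}) :
    ∃ σ : Equiv.Perm ι, μ ∘ σ = ν :=
  ⟨Equiv.ofFiberEquiv fun c => Fintype.equivOfCardEq (by simpa [Fintype.card_subtype] using h c),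
    funext (Equiv.ofFiberEquiv_map _)⟩

theorem sum_comp_eq_sum_card_fiber_mul {ι : Type*} [Fintype ι] {A : Finset ℕ} {ν : ι → ℕ}
    (hν : ∀ i, ν i ∈ A) (Λ : ℕ → ℝ) :
    ∑ i, Λ (ν i) = ∑ n ∈ A, (#{i | ν i = n} : ℝ) * Λ n := by
  rw [← Finset.sum_fiberwise_of_maps_to fun i _ => hν i]
  refine Finset.sum_congr rfl fun n _ => ?_
  rw [Finset.sum_congr rfl fun i hi => by rw [(Finset.mem_filter.1 hi).2], Finset.sum_const,
    nsmul_eq_mul]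

/-- On a superincreasing set, a sum of at most `k` frequencies determines its summands. -/
def IsSuperincreasing (Λ : ℕ → ℝ) (k : ℕ) (A : Finset ℕ) : Prop :=
  ∀ n ∈ A, k * ∑ m ∈ A with m < n, Λ m < Λ n

variable {Λ : ℕ → ℝ} {k : ℕ} {A : Finset ℕ}

theorem isSuperincreasing_insert {a : ℕ} (ha : ∀ m ∈ A, m < a) :
    IsSuperincreasing Λ k (insert a A) ↔ IsSuperincreasing Λ k A ∧ k * ∑ m ∈ A, Λ m < Λ a := by
  have hlt : ∀ m ∈ A, {x ∈ insert a A | x < m} = {x ∈ A | x < m} := fun m hm => by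
    rw [Finset.filter_insert, if_neg (ha m hm).not_gt]
  have htop : {x ∈ insert a A | x < a} = A := by
    rw [Finset.filter_insert, if_neg (lt_irrefl a), Finset.filter_true_of_mem ha]
  simp only [IsSuperincreasing, Finset.forall_mem_insert, htop]
  constructor
  · rintro ⟨htop, hA⟩
    exact ⟨fun m hm => hlt m hm ▸ hA m hm, htop⟩
  · rintro ⟨hA, htop⟩
    exact ⟨htop, fun m hm => (hlt m hm).symm ▸ hA m hm⟩

theorem exists_isSuperincreasing_card_eq (hΛ : Tendsto Λ atTop atTop) (k N : ℕ) :
    ∃ A : Finset ℕ, #A = N ∧ IsSuperincreasing Λ k A := by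
  induction N with
  | zero => exact ⟨∅, rfl, by simp [IsSuperincreasing]⟩
  | succ N ih =>
    obtain ⟨A, hcard, hA⟩ := ih
    obtain ⟨a, hmax, hbig⟩ := ((eventually_gt_atTop (A.sup id)).and
      (hΛ.eventually_gt_atTop (k * ∑ m ∈ A, Λ m))).exists
    have ha : ∀ m ∈ A, m < a := fun m hm => (Finset.le_sup (f := id) hm).trans_lt hmax
    refine ⟨insert a A, ?_, (isSuperincreasing_insert ha).2 ⟨hA, hbig⟩⟩
    rw [Finset.card_insert_of_notMem fun h => lt_irrefl a (ha a h), hcard]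

theorem IsSuperincreasing.pos (hA : IsSuperincreasing Λ k A) : ∀ n ∈ A, 0 < Λ n := by
  intro n
  induction n using Nat.strong_induction_on with
  | _ n ih =>
    intro hn
    have hsum : 0 ≤ ∑ m ∈ A with m < n, Λ m := Finset.sum_nonneg fun m hm =>
      (ih m (Finset.mem_filter.1 hm).2 (Finset.mem_filter.1 hm).1).le
    exact (mul_nonneg (Nat.cast_nonneg k) hsum).trans_lt (hA n hn)

theorem IsSuperincreasing.eqOn_of_sum_eq (hA : IsSuperincreasing Λ k A) {c d : ℕ → ℕ}
    (hc : ∀ n ∈ A, c n ≤ k) (hd : ∀ n ∈ A, d n ≤ k)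
    (h : ∑ n ∈ A, (c n : ℝ) * Λ n = ∑ n ∈ A, (d n : ℝ) * Λ n) : ∀ n ∈ A, c n = d n := by
  induction A using Finset.induction_on_max with
  | empty => simp
  | insert a A ha ih =>
    obtain ⟨hA', hbig⟩ := (isSuperincreasing_insert ha).1 hA
    have haA : a ∉ A := fun h => lt_irrefl a (ha a h)
    have hpos := hA'.pos
    -- the lower digits contribute less than `Λ a`, so the digit at `a` is forced
    have hlow : ∀ e : ℕ → ℕ, (∀ n ∈ A, e n ≤ k) →
        0 ≤ ∑ n ∈ A, (e n : ℝ) * Λ n ∧ ∑ n ∈ A, (e n : ℝ) * Λ n < Λ a := fun e he =>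
      ⟨Finset.sum_nonneg fun n hn => mul_nonneg (Nat.cast_nonneg _) (hpos n hn).le,
        lt_of_le_of_lt (by
          rw [Finset.mul_sum]
          exact Finset.sum_le_sum fun n hn => mul_le_mul_of_nonneg_right
            (by exact_mod_cast he n hn) (hpos n hn).le) hbig⟩
    obtain ⟨hc0, hc1⟩ := hlow c fun n hn => hc n (Finset.mem_insert_of_mem hn)
    obtain ⟨hd0, hd1⟩ := hlow d fun n hn => hd n (Finset.mem_insert_of_mem hn)
    rw [Finset.sum_insert haA, Finset.sum_insert haA] at h
    have hΛa : 0 < Λ a := hA.pos a (Finset.mem_insert_self a A)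
    have hca : c a = d a := by
      rcases lt_trichotomy (c a) (d a) with hlt | heq | hgt
      · have : (c a : ℝ) + 1 ≤ d a := by exact_mod_cast hlt
        nlinarith
      · exact heq
      · have : (d a : ℝ) + 1 ≤ c a := by exact_mod_cast hgt
        nlinarith
    rw [hca, add_left_cancel_iff] at h
    exact (Finset.forall_mem_insert _ _ _).2 ⟨hca, ih hA'
      (fun n hn => hc n (Finset.mem_insert_of_mem hn))
      (fun n hn => hd n (Finset.mem_insert_of_mem hn)) h⟩

theorem IsSuperincreasing.exists_perm_of_sum_eq (hA : IsSuperincreasing Λ k A)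
    {ν μ : Fin k → ℕ} (hν : ∀ i, ν i ∈ A) (hμ : ∀ i, μ i ∈ A)
    (h : ∑ i, Λ (ν i) = ∑ i, Λ (μ i)) : ∃ σ : Equiv.Perm (Fin k), μ ∘ σ = ν := by
  refine exists_perm_comp_eq_of_card_fiber_eq fun n => ?_
  by_cases hn : n ∈ A
  · have hfiber : ∀ ρ : Fin k → ℕ, ∀ n ∈ A, #{i | ρ i = n} ≤ k := fun ρ n _ =>
      (Finset.card_filter_le _ _).trans (by simp)
    rw [sum_comp_eq_sum_card_fiber_mul hν, sum_comp_eq_sum_card_fiber_mul hμ] at h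
    exact hA.eqOn_of_sum_eq (hfiber ν) (hfiber μ) h n hn
  · have hempty : ∀ ρ : Fin k → ℕ, (∀ i, ρ i ∈ A) → #{i | ρ i = n} = 0 := fun ρ hρ => by
      simp only [Finset.card_eq_zero, Finset.filter_eq_empty_iff]
      exact fun i _ hi => hn (hi ▸ hρ i)
    rw [hempty ν hν, hempty μ hμ]

theorem IsSuperincreasing.card_filter_sum_eq_le (hA : IsSuperincreasing Λ k A) :
    #{q ∈ (Fintype.piFinset fun _ : Fin k => A) ×ˢ (Fintype.piFinset fun _ : Fin k => A) |
      ∑ i, Λ (q.1 i) = ∑ i, Λ (q.2 i)} ≤ #A ^ k * k.factorial := by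
  classical
  calc _ ≤ #(((Fintype.piFinset fun _ : Fin k => A) ×ˢ
          (Finset.univ : Finset (Equiv.Perm (Fin k)))).image fun x => (x.1 ∘ x.2, x.1)) := by
        refine Finset.card_le_card fun q hq => ?_
        obtain ⟨hq, hsum⟩ := Finset.mem_filter.1 hq
        obtain ⟨hν, hμ⟩ := Finset.mem_product.1 hq
        obtain ⟨σ, hσ⟩ := hA.exists_perm_of_sum_eq (Fintype.mem_piFinset.1 hν)
          (Fintype.mem_piFinset.1 hμ) hsum
        exact Finset.mem_image.2 ⟨(q.2, σ), Finset.mem_product.2 ⟨hμ, Finset.mem_univ _⟩,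
          Prod.ext hσ rfl⟩
    _ ≤ _ := Finset.card_image_le
    _ = #A ^ k * k.factorial := by simp [Fintype.card_perm]

end Superincreasing

section SuperincreasingMoments

theorem tendsto_centeredMean_norm_expSum_rpow_two_mul (Λ : ℕ → ℝ) (A : Finset ℕ) (k : ℕ) :
    Tendsto (fun R => centeredMean R fun t => ‖expSum A (fun _ => 1) Λ t‖ ^ (2 * k : ℝ)) atTop
      (𝓝 #{q ∈ (Fintype.piFinset fun _ : Fin k => A) ×ˢ (Fintype.piFinset fun _ : Fin k => A) |
        ∑ i, Λ (q.1 i) = ∑ i, Λ (q.2 i)}) := by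
  have hpow : ∀ t, ‖expSum A (fun _ => 1) Λ t‖ ^ (2 * k : ℝ) =
      ‖expSum (Fintype.piFinset fun _ : Fin k => A) (fun _ => 1) (fun ν => ∑ i, Λ (ν i)) t‖ ^ 2 :=
    fun t => by
      rw [show (2 * k : ℝ) = ((k * 2 : ℕ) : ℝ) by push_cast; ring, Real.rpow_natCast, pow_mul,
        ← norm_pow, expSum_pow]
      simp only [Finset.prod_const_one]
  simp_rw [hpow]
  convert tendsto_centeredMean_norm_expSum_sq _ _ _
  simp

variable {Λ : ℕ → ℝ} {k : ℕ} {A : Finset ℕ}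

theorem IsSuperincreasing.limsup_dirichletMpR_le (hA : IsSuperincreasing Λ k A) {p : ℝ}
    (hp : 0 < p) (hpk : p ≤ 2 * k) :
    limsup (dirichletMpR Λ p A fun _ => 1) atTop ≤
      (k.factorial : ℝ) ^ (1 / (2 * k : ℝ)) * √(#A : ℝ) := by
  set E := #{q ∈ (Fintype.piFinset fun _ : Fin k => A) ×ˢ (Fintype.piFinset fun _ : Fin k => A) |
    ∑ i, Λ (q.1 i) = ∑ i, Λ (q.2 i)}
  have hk : (0 : ℝ) < 2 * k := hp.trans_le hpk
  have hlim : Tendsto (dirichletMpR Λ (2 * k) A fun _ => 1) atTop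
      (𝓝 ((E : ℝ) ^ (1 / (2 * k : ℝ)))) :=
    ((Real.continuousAt_rpow_const _ _ (Or.inr (by positivity))).tendsto).comp
      (tendsto_centeredMean_norm_expSum_rpow_two_mul Λ A k)
  have hbdd : IsCoboundedUnder (· ≤ ·) atTop (dirichletMpR Λ p A fun _ => 1) :=
    isCoboundedUnder_le_of_eventually_le atTop <| (eventually_ge_atTop 0).mono fun R hR =>
      dirichletMpR_nonneg Λ A _ hR p
  calc limsup (dirichletMpR Λ p A fun _ => 1) atTop
      ≤ (E : ℝ) ^ (1 / (2 * k : ℝ)) :=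
        (limsup_le_limsup ((eventually_gt_atTop 0).mono fun R hR =>
          dirichletMpR_le_dirichletMpR Λ A _ hp hpk hR) hbdd hlim.isBoundedUnder_le).trans_eq
          hlim.limsup_eq
    _ ≤ ((#A : ℝ) ^ k * k.factorial) ^ (1 / (2 * k : ℝ)) := by
        gcongr
        exact_mod_cast hA.card_filter_sum_eq_le
    _ = (k.factorial : ℝ) ^ (1 / (2 * k : ℝ)) * √(#A : ℝ) := by
        rw [Real.mul_rpow (by positivity) (by positivity), ← Real.rpow_natCast,
          ← Real.rpow_mul (Nat.cast_nonneg _), Real.sqrt_eq_rpow, mul_comm]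
        have : (k : ℝ) ≠ 0 := by linarith
        congr 2
        field_simp

end SuperincreasingMoments

end GeneralDirichlet

open GeneralDirichlet in
theorem fundamental_functions_Hp_general_gt_two_general (Λ : ℕ → ℝ) (hmono : StrictMono Λ)
    (hunb : Tendsto Λ atTop atTop)
    (p : ℝ) (hp : 2 < p) :
    ∃ c C c' C' : ℝ, 0 < c ∧ 0 < C ∧ 0 < c' ∧ 0 < C' ∧ ∀ N : ℕ, 1 ≤ N →
      ((∀ (A : Finset ℕ) (ε : ℕ → ℂ), N ≤ A.card → (∀ n ∈ A, ‖ε n‖ = 1) →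
          c * Real.sqrt N ≤ liminf (dirichletMpR Λ p A ε) atTop) ∧
        (∃ A : Finset ℕ, N ≤ A.card ∧
          limsup (dirichletMpR Λ p A fun _ => 1) atTop ≤ C * Real.sqrt N) ∧
        (∀ (A : Finset ℕ) (ε : ℕ → ℂ), A.card ≤ N → (∀ n ∈ A, ‖ε n‖ = 1) →
          limsup (dirichletMpR Λ p A ε) atTop ≤ C' * (N : ℝ) ^ (1 - 1 / p)) ∧
        (∃ A : Finset ℕ, A.card ≤ N ∧
          c' * Real.sqrt N ≤ liminf (dirichletMpR Λ p A fun _ => 1) atTop)) := by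
  obtain ⟨k, hk⟩ : ∃ k : ℕ, p ≤ 2 * k := ⟨⌈p / 2⌉₊, by linarith [Nat.le_ceil (p / 2)]⟩
  have lower : ∀ (A : Finset ℕ) (ε : ℕ → ℂ), (∀ n ∈ A, ‖ε n‖ = 1) →
      √(#A : ℝ) ≤ liminf (dirichletMpR Λ p A ε) atTop := fun A ε hε =>
    sqrt_card_le_liminf_dirichletMpR Λ hmono.injective hε hp.le
  refine ⟨1, (k.factorial : ℝ) ^ (1 / (2 * k : ℝ)), 1, 1, one_pos, by positivity, one_pos,
    one_pos, fun N _ => ⟨fun A ε hA hε => ?_, ?_, fun A ε hA hε => ?_, ?_⟩⟩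
  · rw [one_mul]
    exact (Real.sqrt_le_sqrt (by exact_mod_cast hA)).trans (lower A ε hε)
  · obtain ⟨A, hcard, hA⟩ := exists_isSuperincreasing_card_eq hunb k N
    exact ⟨A, hcard.ge, hcard ▸ hA.limsup_dirichletMpR_le (by linarith) hk⟩
  · rw [one_mul]
    exact (limsup_dirichletMpR_le_card_rpow Λ hmono.injective hε hp.le).trans
      (Real.rpow_le_rpow (Nat.cast_nonneg _) (by exact_mod_cast hA) (by
        rw [sub_nonneg, div_le_one (by linarith)]; linarith))
  · exact ⟨Finset.range N, (Finset.card_range N).le, by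
      simpa using lower (Finset.range N) (fun _ => 1) (by simp)⟩

/-- Fundamental functions of the canonical basis of `H_p^λ`, `2 < p < ∞`, for an arbitrary
frequency `λ`.  Here `1/p' = 1 - 1/p`. -/
theorem fundamental_functions_Hp_general_gt_two (Λ : ℕ → ℝ) (hmono : StrictMono Λ)
    (hpos : ∀ n, 0 ≤ Λ n) (hunb : Tendsto Λ atTop atTop)
    (p : ℝ) (hp : 2 < p) :
    ∃ c C c' C' : ℝ, 0 < c ∧ 0 < C ∧ 0 < c' ∧ 0 < C' ∧ ∀ N : ℕ, 1 ≤ N →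
      ((∀ (A : Finset ℕ) (ε : ℕ → ℂ), N ≤ A.card → (∀ n ∈ A, ‖ε n‖ = 1) →
          c * Real.sqrt N ≤ liminf (dirichletMpR Λ p A ε) atTop) ∧
        (∃ A : Finset ℕ, N ≤ A.card ∧
          limsup (dirichletMpR Λ p A fun _ => 1) atTop ≤ C * Real.sqrt N) ∧
        (∀ (A : Finset ℕ) (ε : ℕ → ℂ), A.card ≤ N → (∀ n ∈ A, ‖ε n‖ = 1) →
          limsup (dirichletMpR Λ p A ε) atTop ≤ C' * (N : ℝ) ^ (1 - 1 / p)) ∧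
        (∃ A : Finset ℕ, A.card ≤ N ∧
          c' * Real.sqrt N ≤ liminf (dirichletMpR Λ p A fun _ => 1) atTop)) :=
  fundamental_functions_Hp_general_gt_two_general Λ hmono hunb p hp
end

section
/- Let λ = (λ_n) be a lacunary frequency with λ_1 > 0, i.e. there exists L > 1 such that λ_{n+1} ≥ L·λ_n for all n. Then there exists a constant C > 0 such that for every finite set A ⊆ ℕ and all complex coefficients (a_n)_{n∈A}: ∑_{n∈A} |a_n| ≤ C · sup_{t∈ℝ} |∑_{n∈A} a_n e^{-iλ_n t}| (and trivially sup_{t∈ℝ} |∑_{n∈A} a_n e^{-iλ_n t}| ≤ ∑_{n∈A} |a_n|). (That is, the H_∞^λ-norm on Dirichlet polynomials is equivalent to the ℓ¹-norm of the coefficients.) -/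
/-!
Split `A` into the `k` residue classes modulo `k`, where `L ^ k` is so large that inside one
class each frequency exceeds the sum of all smaller ones by a wide margin. For such a class `D`
the Riesz product `K(t) = ∏_{n ∈ D} (1 + Re (u_n e^{iλ_n t}))` is nonnegative, has mean value `1`,
and its spectrum meets `{λ_m}` exactly in the `λ_n`, `n ∈ D`, each with coefficient `u_n / 2`.
With `u_n = conj a_n / |a_n|`, the mean value of `F · K`, where `F(t) = ∑ a_n e^{-iλ_n t}`, is
`(1/2) ∑_{n ∈ D} |a_n|`, and it is at most `sup |F|` because `K ≥ 0` has mean `1`.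
Summing over the classes gives the constant `2k`.
-/

open Filter Finset

/-- The `H_∞^λ` norm of the `λ`-Dirichlet polynomial `∑_{n∈A} a_n e^{-λ_n s}`:
`sup_{t∈ℝ} |∑_{n∈A} a_n e^{-iλ_n t}|`. -/
noncomputable def dirichletSupNorm (Λ : ℕ → ℝ) (A : Finset ℕ) (a : ℕ → ℂ) : ℝ :=
  ⨆ t : ℝ, ‖∑ n ∈ A, a n * Complex.exp (-(Complex.I * (Λ n * t)))‖

open AddMonoidAlgebra Complex ComplexConjugate Topology

noncomputable section

def expAddChar (t : ℝ) : AddChar ℝ ℂ where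
  toFun ξ := cexp (ξ * t * I)
  map_zero_eq_one' := by simp
  map_add_eq_mul' ξ η := by rw [← Complex.exp_add]; push_cast; ring_nf

/-- Trigonometric polynomials with real frequencies are modelled by `ℂ[ℝ]`, with `single ξ c`
standing for `t ↦ c e^{iξt}`; evaluation at `t` is then an algebra map. -/
def trigEval (t : ℝ) : ℂ[ℝ] →ₐ[ℂ] ℂ :=
  AddMonoidAlgebra.lift ℂ ℂ ℝ (expAddChar t).toMonoidHom

lemma trigEval_single (t ξ : ℝ) (c : ℂ) :
    trigEval t (single ξ c) = c * cexp (ξ * t * I) := by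
  simp [trigEval, expAddChar]

lemma trigEval_apply (t : ℝ) (p : ℂ[ℝ]) :
    trigEval t p = ∑ ξ ∈ p.coeff.support, p.coeff ξ * cexp (ξ * t * I) := by
  simp [trigEval, AddMonoidAlgebra.lift_apply, Finsupp.sum, expAddChar]

lemma continuous_trigEval (p : ℂ[ℝ]) : Continuous fun t ↦ trigEval t p := by
  simp only [trigEval_apply]
  fun_prop

lemma tendsto_average_cexp (ξ : ℝ) :
    Tendsto (fun T : ℝ ↦ ⨍ t in -T..T, cexp (ξ * t * I)) atTop
      (𝓝 (if ξ = 0 then 1 else 0)) := by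
  split_ifs with hξ
  · refine tendsto_const_nhds.congr' ?_
    filter_upwards [eventually_gt_atTop 0] with T hT
    have : (T : ℂ) ≠ 0 := by exact_mod_cast hT.ne'
    simp only [hξ, ofReal_zero, zero_mul, exp_zero, interval_average_eq, sub_neg_eq_add,
      intervalIntegral.integral_const, real_smul, ofReal_add, mul_one, smul_add, ofReal_inv]
    field_simp
  · have hξI : (ξ * I : ℂ) ≠ 0 := by simp [hξ]
    refine squeeze_zero_norm' (a := fun T ↦ T⁻¹ * |ξ|⁻¹) ?_ ?_
    · filter_upwards [eventually_gt_atTop 0] with T hT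
      have hint : ∫ t in -T..T, cexp (ξ * t * I) =
          (cexp (ξ * I * T) - cexp (ξ * I * ↑(-T))) / (ξ * I) := by
        simp_rw [mul_right_comm _ _ I]
        exact integral_exp_mul_complex hξI
      have hnum : ‖cexp (ξ * I * T) - cexp (ξ * I * ↑(-T))‖ ≤ 2 := by
        refine (norm_sub_le _ _).trans ?_
        simp_rw [mul_right_comm _ I, ← ofReal_mul, norm_exp_ofReal_mul_I]
        norm_num
      rw [interval_average_eq, hint, norm_smul, norm_div, norm_mul, norm_I, mul_one, norm_real,
        Real.norm_eq_abs, sub_neg_eq_add, ← two_mul, abs_inv, abs_of_pos (by positivity)]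
      calc (2 * T)⁻¹ * (‖cexp (ξ * I * T) - cexp (ξ * I * ↑(-T))‖ / |ξ|)
          ≤ (2 * T)⁻¹ * (2 / |ξ|) := by gcongr
        _ = T⁻¹ * |ξ|⁻¹ := by field_simp
    · simpa using tendsto_inv_atTop_zero.mul_const |ξ|⁻¹

lemma tendsto_average_trigEval (p : ℂ[ℝ]) :
    Tendsto (fun T : ℝ ↦ ⨍ t in -T..T, trigEval t p) atTop (𝓝 (p.coeff 0)) := by
  have hsum : ∀ T : ℝ, ⨍ t in -T..T, trigEval t p =
      ∑ ξ ∈ p.coeff.support, p.coeff ξ * ⨍ t in -T..T, cexp (ξ * t * I) := by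
    intro T
    simp only [trigEval_apply, interval_average_eq, Finset.smul_sum,
      intervalIntegral.integral_finsetSum fun ξ _ ↦ (by fun_prop : Continuous fun t : ℝ ↦
        p.coeff ξ * cexp (ξ * t * I)).intervalIntegrable _ _, intervalIntegral.integral_const_mul,
      mul_smul_comm]
  simp only [hsum]
  convert tendsto_finsetSum _ fun ξ _ ↦ (tendsto_average_cexp ξ).const_mul (p.coeff ξ)
  simp [mul_ite, Finset.sum_ite_eq']

lemma norm_coeff_zero_mul_le {p q : ℂ[ℝ]} {k : ℝ → ℝ} {S : ℝ}
    (hp : ∀ t, ‖trigEval t p‖ ≤ S) (hq : ∀ t, trigEval t q = k t) (hk : ∀ t, 0 ≤ k t)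
    (hq0 : q.coeff 0 = 1) :
    ‖(p * q).coeff 0‖ ≤ S := by
  have hk_cont : Continuous k := by
    simpa [Function.comp_def, hq] using continuous_re.comp (continuous_trigEval q)
  have hT : ∀ T > 0,
      ‖⨍ t in -T..T, trigEval t (p * q)‖ ≤ S * ‖⨍ t in -T..T, trigEval t q‖ := by
    intro T hT
    have hpq : ‖∫ t in -T..T, trigEval t (p * q)‖ ≤ ∫ t in -T..T, S * k t := by
      refine intervalIntegral.norm_integral_le_of_norm_le (by linarith) ?_
        ((continuous_const.mul hk_cont).intervalIntegrable _ _)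
      refine .of_forall fun t _ ↦ ?_
      rw [map_mul, hq, norm_mul, norm_real, Real.norm_of_nonneg (hk t)]
      exact mul_le_mul_of_nonneg_right (hp t) (hk t)
    simp only [hq, interval_average_eq, intervalIntegral.integral_ofReal, norm_smul, norm_real]
    rw [Real.norm_of_nonneg (intervalIntegral.integral_nonneg (by linarith) fun t _ ↦ hk t)]
    rw [intervalIntegral.integral_const_mul] at hpq
    calc _ ≤ ‖(T - -T)⁻¹‖ * (S * ∫ t in -T..T, k t) := by gcongr
      _ = _ := by ring
  simpa [hq0] using le_of_tendsto_of_tendsto (tendsto_average_trigEval (p * q)).norm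
    ((tendsto_average_trigEval q).norm.const_mul S) (eventually_gt_atTop 0 |>.mono hT)

def rieszFactor (ξ : ℝ) (u : ℂ) : ℂ[ℝ] := 1 + single ξ (u / 2) + single (-ξ) (conj u / 2)

lemma trigEval_rieszFactor (t ξ : ℝ) (u : ℂ) :
    trigEval t (rieszFactor ξ u) = ↑(1 + (u * cexp (ξ * t * I)).re) := by
  have hconj : cexp (↑(-ξ) * t * I) = conj (cexp (ξ * t * I)) := by
    rw [← exp_conj]; simp
  simp only [rieszFactor, map_add, map_one, trigEval_single, hconj, ofReal_add, ofReal_one,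
    re_eq_add_conj, map_mul]
  ring

lemma coeff_mul_rieszFactor (p : ℂ[ℝ]) (ξ η : ℝ) (u : ℂ) :
    (p * rieszFactor ξ u).coeff η =
      p.coeff η + p.coeff (η - ξ) * (u / 2) + p.coeff (η + ξ) * (conj u / 2) := by
  simp [rieszFactor, mul_add, AddMonoidAlgebra.coeff_add, sub_eq_add_neg]

def rieszProduct (Λ : ℕ → ℝ) (u : ℕ → ℂ) (D : Finset ℕ) : ℂ[ℝ] :=
  ∏ n ∈ D, rieszFactor (Λ n) (u n)

lemma rieszProduct_insert (Λ : ℕ → ℝ) (u : ℕ → ℂ) {D : Finset ℕ} {M : ℕ} (hM : M ∉ D) :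
    rieszProduct Λ u (insert M D) = rieszProduct Λ u D * rieszFactor (Λ M) (u M) := by
  rw [rieszProduct, Finset.prod_insert hM, mul_comm, rieszProduct]

lemma coeff_rieszProduct_eq_zero (Λ : ℕ → ℝ) (u : ℕ → ℂ) (D : Finset ℕ) {η : ℝ}
    (hη : ∑ n ∈ D, |Λ n| < |η|) : (rieszProduct Λ u D).coeff η = 0 := by
  induction D using Finset.induction_on generalizing η with
  | empty =>
    have : η ≠ 0 := by simpa using hη
    simp [rieszProduct, AddMonoidAlgebra.one_def, this.symm]
  | insert M D hM ih =>
    rw [Finset.sum_insert hM] at hη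
    rw [rieszProduct_insert Λ u hM, coeff_mul_rieszFactor, ih, ih, ih]
    · ring
    · linarith [abs_sub_abs_le_abs_add η (Λ M)]
    · linarith [abs_sub_abs_le_abs_sub η (Λ M)]
    · linarith [abs_nonneg (Λ M)]

lemma coeff_rieszProduct (Λ : ℕ → ℝ) (u : ℕ → ℂ) {c : ℝ} (hΛ : ∀ n, 0 < Λ n) (hc : c ≤ 1)
    (hsep : ∀ n M, n ≠ M → c * Λ M ≤ |Λ n - Λ M|) {D : Finset ℕ}
    (hD : ∀ M ∈ D, ∑ m ∈ D with m < M, Λ m < c * Λ M) :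
    (rieszProduct Λ u D).coeff 0 = 1 ∧
      ∀ n, (rieszProduct Λ u D).coeff (Λ n) = if n ∈ D then u n / 2 else 0 := by
  induction D using Finset.induction_on_max with
  | empty => simp [rieszProduct, AddMonoidAlgebra.one_def, (hΛ _).ne]
  | insert M B hB ih =>
    have hMB : M ∉ B := fun h ↦ (hB M h).false
    obtain ⟨ih0, ihΛ⟩ := ih fun m hm ↦ by
      simpa [Finset.filter_insert, (hB m hm).not_gt] using hD m (Finset.mem_insert_of_mem hm)
    have hs : ∑ m ∈ B, Λ m < c * Λ M := by
      simpa [Finset.filter_insert, Finset.filter_true_of_mem hB]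
        using hD M (Finset.mem_insert_self M B)
    have hsupp : ∀ η, c * Λ M ≤ |η| → (rieszProduct Λ u B).coeff η = 0 := fun η hη ↦
      coeff_rieszProduct_eq_zero Λ u B <| by
        simpa [abs_of_pos (hΛ _)] using hs.trans_le hη
    have hcM : c * Λ M ≤ Λ M := mul_le_of_le_one_left (hΛ M).le hc
    have habs : ∀ n, c * Λ M ≤ |Λ n + Λ M| := fun n ↦ by
      rw [abs_of_pos (by linarith [hΛ n, hΛ M])]; linarith [hΛ n]
    -- the spectrum of the product over `B` lies in `(-c Λ M, c Λ M)`, and multiplying by the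
    -- factor of `M` only adds copies of it shifted by `± Λ M`
    simp only [rieszProduct_insert Λ u hMB, coeff_mul_rieszFactor]
    refine ⟨?_, fun n ↦ ?_⟩
    · rw [ih0, hsupp, hsupp] <;> simp [abs_of_pos (hΛ M), hcM]
    · rw [ihΛ, hsupp (Λ n + Λ M) (habs n)]
      by_cases hn : n = M
      · subst hn
        simp [hMB, ih0]
      · rw [hsupp _ (hsep n M hn)]
        simp [hn]

section Lacunary

variable {Λ : ℕ → ℝ} {L : ℝ}

lemma one_sub_inv_mul_le_abs_sub (hmono : Monotone Λ) (hlac : ∀ n, L * Λ n ≤ Λ (n + 1))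
    (hΛ : ∀ n, 0 ≤ Λ n) (hL : 1 < L) {n M : ℕ} (h : n ≠ M) :
    (1 - L⁻¹) * Λ M ≤ |Λ n - Λ M| := by
  have hLinv : L * L⁻¹ = 1 := mul_inv_cancel₀ (by positivity)
  rcases h.lt_or_gt with h | h
  · have : L * Λ n ≤ Λ M := (hlac n).trans (hmono h)
    rw [abs_sub_comm, abs_of_nonneg (by nlinarith [hΛ n])]
    nlinarith [hΛ n, inv_pos.mpr (zero_lt_one.trans hL)]
  · have : L * Λ M ≤ Λ n := (hlac M).trans (hmono h)
    have hc : 1 - L⁻¹ ≤ L - 1 := by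
      nlinarith [mul_le_mul_of_nonneg_left hL.le (sub_nonneg.2 (inv_le_one_of_one_le₀ hL.le))]
    rw [abs_of_nonneg (by nlinarith [hΛ M])]
    nlinarith [mul_le_mul_of_nonneg_right hc (hΛ M)]

lemma pow_mul_le_of_modEq (hmono : Monotone Λ) (hlac : ∀ n, L * Λ n ≤ Λ (n + 1))
    (hL : 0 ≤ L) {m M k : ℕ} (hlt : m < M) (hmod : m ≡ M [MOD k]) :
    L ^ k * Λ m ≤ Λ M := by
  have hpow : ∀ i, L ^ i * Λ m ≤ Λ (m + i) := by
    intro i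
    induction i with
    | zero => simp
    | succ i ih =>
      calc L ^ (i + 1) * Λ m = L * (L ^ i * Λ m) := by ring
        _ ≤ L * Λ (m + i) := by gcongr
        _ ≤ Λ (m + (i + 1)) := hlac (m + i)
  have hk : k ≤ M - m := Nat.le_of_dvd (by omega) ((Nat.modEq_iff_dvd' hlt.le).mp hmod)
  exact (hpow k).trans (hmono (by omega))

lemma mul_sum_le_of_modEq (hmono : Monotone Λ) (hlac : ∀ n, L * Λ n ≤ Λ (n + 1))
    (hΛ : ∀ n, 0 ≤ Λ n) (hL : 0 ≤ L) (k : ℕ) (B : Finset ℕ) :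
    ∀ M, (∀ m ∈ B, m < M ∧ m ≡ M [MOD k]) → (L ^ k - 1) * ∑ m ∈ B, Λ m ≤ Λ M := by
  induction B using Finset.induction_on_max with
  | empty => simpa using hΛ
  | insert a B hB ih =>
    intro M hM
    have haM := hM a (Finset.mem_insert_self a B)
    have hsum := ih a fun m hm ↦
      ⟨hB m hm, (hM m (Finset.mem_insert_of_mem hm)).2.trans haM.2.symm⟩
    rw [Finset.sum_insert fun h ↦ (hB a h).false]
    nlinarith [pow_mul_le_of_modEq hmono hlac hL haM.1 haM.2]

lemma sum_filter_lt_lt_of_modEq (hmono : Monotone Λ) (hlac : ∀ n, L * Λ n ≤ Λ (n + 1))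
    (hΛ : ∀ n, 0 < Λ n) (hL : 0 ≤ L) {k : ℕ} {c : ℝ} (hc : 0 < c)
    (hck : 1 < c * (L ^ k - 1)) {D : Finset ℕ} (hD : ∀ m ∈ D, ∀ m' ∈ D, m ≡ m' [MOD k]) :
    ∀ M ∈ D, ∑ m ∈ D with m < M, Λ m < c * Λ M := by
  intro M hM
  have := mul_sum_le_of_modEq hmono hlac (fun n ↦ (hΛ n).le) hL k (D.filter (· < M)) M
    fun m hm ↦ by
      rw [Finset.mem_filter] at hm
      exact ⟨hm.2, hD m hm.1 M hM⟩
  have hQ : 0 < L ^ k - 1 := by nlinarith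
  nlinarith [hΛ M]

end Lacunary

lemma norm_sum_exp_le_sum_norm (Λ : ℕ → ℝ) (A : Finset ℕ) (a : ℕ → ℂ) (t : ℝ) :
    ‖∑ n ∈ A, a n * cexp (-(I * (Λ n * t)))‖ ≤ ∑ n ∈ A, ‖a n‖ := by
  refine (norm_sum_le _ _).trans_eq (Finset.sum_congr rfl fun n _ ↦ ?_)
  simp [norm_exp]

lemma dirichletSupNorm_le_sum_norm (Λ : ℕ → ℝ) (A : Finset ℕ) (a : ℕ → ℂ) :
    dirichletSupNorm Λ A a ≤ ∑ n ∈ A, ‖a n‖ :=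
  ciSup_le (norm_sum_exp_le_sum_norm Λ A a)

lemma norm_sum_exp_le_dirichletSupNorm (Λ : ℕ → ℝ) (A : Finset ℕ) (a : ℕ → ℂ) (t : ℝ) :
    ‖∑ n ∈ A, a n * cexp (-(I * (Λ n * t)))‖ ≤ dirichletSupNorm Λ A a :=
  le_ciSup ⟨_, Set.forall_mem_range.2 (norm_sum_exp_le_sum_norm Λ A a)⟩ t

lemma trigEval_sum_single_neg (Λ : ℕ → ℝ) (A : Finset ℕ) (a : ℕ → ℂ) (t : ℝ) :
    trigEval t (∑ n ∈ A, single (-Λ n) (a n)) = ∑ n ∈ A, a n * cexp (-(I * (Λ n * t))) := by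
  simp only [map_sum, trigEval_single]
  congr! 3
  push_cast
  ring

lemma sum_norm_le_two_mul_dirichletSupNorm {Λ : ℕ → ℝ} {c : ℝ} (hΛ : ∀ n, 0 < Λ n)
    (hc : c ≤ 1) (hsep : ∀ n M, n ≠ M → c * Λ M ≤ |Λ n - Λ M|) {A D : Finset ℕ} (hDA : D ⊆ A)
    (hD : ∀ M ∈ D, ∑ m ∈ D with m < M, Λ m < c * Λ M) (a : ℕ → ℂ) :
    ∑ n ∈ D, ‖a n‖ ≤ 2 * dirichletSupNorm Λ A a := by
  -- `u n = 0` when `a n = 0`, which is harmless: only `‖u n‖ ≤ 1` and `a n * u n = ‖a n‖` matter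
  set u : ℕ → ℂ := fun n ↦ conj (a n) / ‖a n‖
  have hu : ∀ n, ‖u n‖ ≤ 1 := fun n ↦ by
    simpa [u] using div_self_le_one ‖a n‖
  have hau : ∀ n, a n * u n = ‖a n‖ := fun n ↦ by
    rcases eq_or_ne (a n) 0 with h | h
    · simp [h]
    · have : (‖a n‖ : ℂ) ≠ 0 := by simpa using h
      rw [← mul_div_assoc, mul_conj', sq, mul_div_cancel_right₀ _ this]
  set K : ℝ → ℝ := fun t ↦ ∏ n ∈ D, (1 + (u n * cexp (Λ n * t * I)).re)
  have hK : ∀ t, trigEval t (rieszProduct Λ u D) = K t := fun t ↦ by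
    simp [rieszProduct, map_prod, trigEval_rieszFactor, K]
  have hK0 : ∀ t, 0 ≤ K t := fun t ↦ Finset.prod_nonneg fun n _ ↦ by
    have : |(u n * cexp (Λ n * t * I)).re| ≤ 1 := (abs_re_le_norm _).trans <| by
      rw [norm_mul, ← ofReal_mul, norm_exp_ofReal_mul_I, mul_one]; exact hu n
    linarith [neg_abs_le (u n * cexp (Λ n * t * I)).re]
  obtain ⟨hR0, hRΛ⟩ := coeff_rieszProduct Λ u hΛ hc hsep hD
  have hbound := norm_coeff_zero_mul_le (p := ∑ n ∈ A, single (-Λ n) (a n))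
    (fun t ↦ (trigEval_sum_single_neg Λ A a t ▸ norm_sum_exp_le_dirichletSupNorm Λ A a t))
    hK hK0 hR0
  have hcoeff : ((∑ n ∈ A, single (-Λ n) (a n)) * rieszProduct Λ u D).coeff 0 =
      ((∑ n ∈ D, ‖a n‖ / 2 : ℝ) : ℂ) := by
    simp only [Finset.sum_mul, AddMonoidAlgebra.coeff_sum, Finsupp.coe_finsetSum, Finset.sum_apply,
      AddMonoidAlgebra.coeff_single_mul_apply, neg_neg, add_zero, hRΛ, mul_ite, mul_zero]
    rw [← Finset.sum_filter, Finset.filter_mem_eq_inter, Finset.inter_eq_right.2 hDA]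
    push_cast
    simp [← mul_div_assoc, hau]
  rw [hcoeff, norm_real, Real.norm_of_nonneg (by positivity), ← Finset.sum_div] at hbound
  linarith

end

theorem lacunary_Hinf_eq_ell1_general (Λ : ℕ → ℝ) (hmono : StrictMono Λ)
    (hfirst : 0 < Λ 0)
    (L : ℝ) (hL : 1 < L) (hlac : ∀ n, L * Λ n ≤ Λ (n + 1)) :
    ∃ C : ℝ, 0 < C ∧ ∀ (A : Finset ℕ) (a : ℕ → ℂ),
      (∑ n ∈ A, ‖a n‖) ≤ C * dirichletSupNorm Λ A a ∧
        dirichletSupNorm Λ A a ≤ ∑ n ∈ A, ‖a n‖ := by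
  have hΛ : ∀ n, 0 < Λ n := fun n ↦ hfirst.trans_le (hmono.monotone n.zero_le)
  have hc : 0 < 1 - L⁻¹ := sub_pos.2 (inv_lt_one_of_one_lt₀ hL)
  obtain ⟨k, hk⟩ := pow_unbounded_of_one_lt (1 + (1 - L⁻¹)⁻¹) hL
  have hck : 1 < (1 - L⁻¹) * (L ^ k - 1) := by
    rw [← div_lt_iff₀' hc, one_div]; linarith
  have hk0 : k ≠ 0 := by rintro rfl; norm_num at hck
  refine ⟨2 * k, by positivity, fun A a ↦ ⟨?_, dirichletSupNorm_le_sum_norm Λ A a⟩⟩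
  have hclass : ∀ j, ∑ n ∈ A with n % k = j, ‖a n‖ ≤ 2 * dirichletSupNorm Λ A a := fun j ↦
    sum_norm_le_two_mul_dirichletSupNorm hΛ (sub_le_self _ (by positivity))
      (fun _ _ ↦ one_sub_inv_mul_le_abs_sub hmono.monotone hlac (fun n ↦ (hΛ n).le) hL)
      (Finset.filter_subset _ _)
      (sum_filter_lt_lt_of_modEq hmono.monotone hlac hΛ (by positivity) hc hck
        fun m hm m' hm' ↦ (Finset.mem_filter.1 hm).2.trans (Finset.mem_filter.1 hm').2.symm) a
  calc ∑ n ∈ A, ‖a n‖ = ∑ j ∈ Finset.range k, ∑ n ∈ A with n % k = j, ‖a n‖ :=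
        (Finset.sum_fiberwise_of_maps_to (fun n _ ↦ Finset.mem_range.2 (Nat.mod_lt n
          (Nat.pos_of_ne_zero hk0))) _).symm
    _ ≤ ∑ j ∈ Finset.range k, 2 * dirichletSupNorm Λ A a := Finset.sum_le_sum fun j _ ↦ hclass j
    _ = 2 * k * dirichletSupNorm Λ A a := by
        rw [Finset.sum_const, Finset.card_range, nsmul_eq_mul]; ring

/-- For a lacunary frequency `λ` with `λ_1 > 0`, the `H_∞^λ` norm of Dirichlet polynomials
is equivalent to the `ℓ¹` norm of the coefficients. -/
theorem lacunary_Hinf_eq_ell1 (Λ : ℕ → ℝ) (hmono : StrictMono Λ)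
    (hpos : ∀ n, 0 ≤ Λ n) (hunb : Tendsto Λ atTop atTop) (hfirst : 0 < Λ 0)
    (L : ℝ) (hL : 1 < L) (hlac : ∀ n, L * Λ n ≤ Λ (n + 1)) :
    ∃ C : ℝ, 0 < C ∧ ∀ (A : Finset ℕ) (a : ℕ → ℂ),
      (∑ n ∈ A, ‖a n‖) ≤ C * dirichletSupNorm Λ A a ∧
        dirichletSupNorm Λ A a ≤ ∑ n ∈ A, ‖a n‖ :=
  lacunary_Hinf_eq_ell1_general Λ hmono hfirst L hL hlac
end

section
/- Let λ = (λ_n) be a frequency whose terms are linearly independent over ℚ. Then for every finite set A ⊆ ℕ and all complex coefficients (a_n)_{n∈A}: sup_{t∈ℝ} |∑_{n∈A} a_n e^{-iλ_n t}| = ∑_{n∈A} |a_n|. -/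
/-!
Write `f(t) = ∑ a_n e^{-iλ_n t}` as the linear form `P = ∑ a_n X_n` evaluated on the line
`t ↦ (e^{-iλ_n t})_n` of the torus. By `ℚ`-independence distinct monomials of `P^k` have
distinct frequencies, so by Parseval the Bohr mean of `|f|^{2k}` is `∑_d |coeff_d (P^k)|²`,
which is at most `(sup |f|)^{2k}`. Evaluating `P^k` at the point `(e^{-i arg a_n})_n` of the
torus instead gives `(∑ |a_n|)^k ≤ ∑_d |coeff_d (P^k)|`, and Cauchy–Schwarz over the at most
`(k+1)^{|A|}` monomials yields `(∑ |a_n|)^{2k} ≤ (k+1)^{|A|} (sup |f|)^{2k}`; let `k → ∞`.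
-/

open Filter Finset

open Topology Complex MvPolynomial ComplexConjugate

def HasMeanValue (g : ℝ → ℂ) (v : ℂ) : Prop :=
  Tendsto (fun T : ℝ => (T : ℂ)⁻¹ * ∫ t in (0 : ℝ)..T, g t) atTop (𝓝 v)

namespace HasMeanValue

theorem const_mul {g : ℝ → ℂ} {v : ℂ} (h : HasMeanValue g v) (c : ℂ) :
    HasMeanValue (fun t => c * g t) (c * v) := by
  unfold HasMeanValue at *
  simpa only [intervalIntegral.integral_const_mul, mul_left_comm] using h.const_mul c

theorem sum {ι : Type*} {s : Finset ι} {g : ι → ℝ → ℂ} {v : ι → ℂ}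
    (hc : ∀ i ∈ s, Continuous (g i)) (h : ∀ i ∈ s, HasMeanValue (g i) (v i)) :
    HasMeanValue (fun t => ∑ i ∈ s, g i t) (∑ i ∈ s, v i) := by
  unfold HasMeanValue at *
  have hmean_sum (T : ℝ) : (T : ℂ)⁻¹ * ∫ t in (0 : ℝ)..T, ∑ i ∈ s, g i t
      = ∑ i ∈ s, (T : ℂ)⁻¹ * ∫ t in (0 : ℝ)..T, g i t := by
    rw [intervalIntegral.integral_finsetSum fun i hi => (hc i hi).intervalIntegrable _ _,
      Finset.mul_sum]
  simpa only [hmean_sum] using tendsto_finsetSum s h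

theorem re_le {u : ℝ → ℝ} {v : ℂ} {B : ℝ} (hu : Continuous u) (hB : ∀ t, u t ≤ B)
    (h : HasMeanValue (fun t => (u t : ℂ)) v) : v.re ≤ B := by
  have hre : Tendsto (fun T : ℝ => T⁻¹ * ∫ t in (0 : ℝ)..T, u t) atTop (𝓝 v.re) := by
    refine ((continuous_re.tendsto v).comp h).congr fun T => ?_
    simp [intervalIntegral.integral_ofReal, ← ofReal_inv]
  refine le_of_tendsto hre ?_
  filter_upwards [eventually_gt_atTop 0] with T hT
  rw [inv_mul_le_iff₀ hT]
  calc ∫ t in (0 : ℝ)..T, u t ≤ ∫ _ in (0 : ℝ)..T, B :=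
        intervalIntegral.integral_mono_on hT.le (hu.intervalIntegrable _ _)
          intervalIntegrable_const fun t _ => hB t
    _ = T * B := by simp

end HasMeanValue

theorem hasMeanValue_exp_ofReal_mul_I (μ : ℝ) :
    HasMeanValue (fun t => exp (↑(μ * t) * I)) (if μ = 0 then 1 else 0) := by
  unfold HasMeanValue
  split_ifs with hμ
  · subst hμ
    refine tendsto_const_nhds.congr' ?_
    filter_upwards [eventually_ne_atTop 0] with T hT
    simp [hT]
  · have hc : (μ : ℂ) * I ≠ 0 := by simp [hμ]
    have hint (T : ℝ) : ∫ t in (0 : ℝ)..T, exp (↑(μ * t) * I)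
        = (exp (μ * I * T) - 1) / (μ * I) := by
      simp_rw [ofReal_mul, mul_right_comm _ _ I]
      rw [integral_exp_mul_complex hc]
      simp
    simp only [hint]
    refine squeeze_zero_norm' (a := fun T : ℝ => T⁻¹ * (2 / ‖(μ : ℂ) * I‖)) ?_ ?_
    · filter_upwards [eventually_gt_atTop 0] with T hT
      rw [norm_mul, norm_div, norm_inv, norm_real, Real.norm_of_nonneg hT.le]
      gcongr
      calc ‖exp (μ * I * T) - 1‖ ≤ ‖exp (μ * I * T)‖ + ‖(1 : ℂ)‖ := norm_sub_le _ _
        _ = 2 := by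
          rw [mul_right_comm, ← ofReal_mul, norm_exp_ofReal_mul_I]; norm_num
    · simpa using tendsto_inv_atTop_zero.mul_const (2 / ‖(μ : ℂ) * I‖)

theorem conj_exp_ofReal_mul_I (x : ℝ) : conj (exp (↑x * I)) = exp (↑(-x) * I) := by
  rw [← exp_conj]; simp

theorem hasMeanValue_norm_sq_sum_exp {ι : Type*} (s : Finset ι) (c : ι → ℂ) {ν : ι → ℝ}
    (hν : Set.InjOn ν s) :
    HasMeanValue (fun t => ((‖∑ i ∈ s, c i * exp (↑(ν i * t) * I)‖ ^ 2 : ℝ) : ℂ))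
      ((∑ i ∈ s, ‖c i‖ ^ 2 : ℝ) : ℂ) := by
  have hexpand (t : ℝ) : ((‖∑ i ∈ s, c i * exp (↑(ν i * t) * I)‖ ^ 2 : ℝ) : ℂ)
      = ∑ i ∈ s, ∑ j ∈ s, c i * conj (c j) * exp (↑((ν i - ν j) * t) * I) := by
    rw [← normSq_eq_norm_sq, ← mul_conj, map_sum, Finset.sum_mul_sum]
    refine Finset.sum_congr rfl fun i _ => Finset.sum_congr rfl fun j _ => ?_
    rw [map_mul, conj_exp_ofReal_mul_I, mul_mul_mul_comm, ← exp_add]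
    push_cast; ring_nf
  have hmean := HasMeanValue.sum (s := s) (fun i _ => by fun_prop) fun i _ =>
    HasMeanValue.sum (s := s) (fun j _ => by fun_prop) fun j _ =>
      (hasMeanValue_exp_ofReal_mul_I (ν i - ν j)).const_mul (c i * conj (c j))
  simp only [hexpand]
  convert hmean using 1
  push_cast
  refine Finset.sum_congr rfl fun i hi => ?_
  rw [Finset.sum_eq_single_of_mem i hi fun j hj hji => by
    rw [if_neg (sub_ne_zero.mpr fun h => hji (hν hj hi h.symm)), mul_zero]]
  simp [mul_conj, normSq_eq_norm_sq]

theorem MvPolynomial.eval_exp_ofReal_mul_I_eq_sum {σ : Type*} (w : σ → ℝ)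
    (p : MvPolynomial σ ℂ) (t : ℝ) :
    eval (fun i => exp (↑(w i * t) * I)) p
      = ∑ d ∈ p.support, coeff d p * exp (↑(Finsupp.weight w d * t) * I) := by
  rw [eval_eq]
  refine Finset.sum_congr rfl fun d _ => ?_
  rw [Finsupp.weight_apply, Finsupp.sum]
  simp_rw [← exp_nat_mul, ← exp_sum]
  congr 2
  push_cast
  simp [Finset.sum_mul, mul_assoc]

theorem MvPolynomial.norm_eval_le_sum_norm_coeff {σ R : Type*} [NormedCommRing R]
    [NormOneClass R] (p : MvPolynomial σ R) {x : σ → R} (hx : ∀ i, ‖x i‖ ≤ 1) :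
    ‖eval x p‖ ≤ ∑ d ∈ p.support, ‖coeff d p‖ := by
  rw [eval_eq]
  refine (norm_sum_le _ _).trans (Finset.sum_le_sum fun d _ => ?_)
  refine (norm_mul_le _ _).trans (mul_le_of_le_one_right (norm_nonneg _) ?_)
  refine (Finset.norm_prod_le _ _).trans (Finset.prod_le_one (fun _ _ => norm_nonneg _) ?_)
  exact fun i _ => (norm_pow_le _ _).trans (pow_le_one₀ (norm_nonneg _) (hx i))

theorem MvPolynomial.card_support_le_of_totalDegree_le {σ R : Type*} [Fintype σ]
    [CommSemiring R] {p : MvPolynomial σ R} {k : ℕ} (h : p.totalDegree ≤ k) :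
    #p.support ≤ (k + 1) ^ Fintype.card σ := by
  classical
  calc #p.support ≤ #(Fintype.piFinset fun _ : σ => range (k + 1)) := by
        refine Finset.card_le_card_of_injOn (⇑) (fun d hd => ?_) DFunLike.coe_injective.injOn
        exact Fintype.mem_piFinset.2 fun i =>
          mem_range_succ_iff.2 ((Finsupp.le_degree i d).trans ((le_totalDegree hd).trans h))
    _ = (k + 1) ^ Fintype.card σ := by simp

theorem LinearIndependent.injective_weight {σ : Type*} {w : σ → ℝ}
    (hw : LinearIndependent ℚ w) : Function.Injective (Finsupp.weight w : (σ →₀ ℕ) → ℝ) :=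
  hw.restrict_scalars' ℕ

theorem le_of_forall_pow_le_mul_pow {x y C : ℝ} (hx : 0 ≤ x) (m : ℕ)
    (h : ∀ k : ℕ, x ^ k ≤ C * (k + 1) ^ m * y ^ k) : x ≤ y := by
  by_contra! hyx
  have hC : 0 < C := one_pos.trans_le (by simpa using h 0)
  have h1 : x ≤ C * 2 ^ m * y := by simpa [one_add_one_eq_two] using h 1
  have hy : 0 ≤ y := nonneg_of_mul_nonneg_right (hx.trans h1) (by positivity)
  have hx0 : 0 < x := hy.trans_lt hyx
  have hy0 : 0 < y := pos_of_mul_pos_right (hx0.trans_le h1) (by positivity)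
  have hr0 : 0 < y / x := by positivity
  have hr1 : y / x < 1 := (div_lt_one hx0).2 hyx
  have hlim := (tendsto_pow_const_mul_const_pow_of_abs_lt_one m
    (abs_lt.2 ⟨by linarith, hr1⟩)).const_mul C
  rw [mul_zero] at hlim
  obtain ⟨k, hk⟩ :=
    ((hlim.comp (tendsto_add_atTop_nat 1)).eventually (gt_mem_nhds hr0)).exists
  have hk' : C * ((k : ℝ) + 1) ^ m * (y / x) ^ k < 1 := by
    have : C * ((k : ℝ) + 1) ^ m * (y / x) ^ k * (y / x) < 1 * (y / x) := by
      simpa [pow_succ, mul_assoc] using hk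
    exact lt_of_mul_lt_mul_right this hr0.le
  rw [div_pow, ← mul_div_assoc, div_lt_one (by positivity)] at hk'
  linarith [h k]

theorem MvPolynomial.norm_eval_le_of_forall_norm_eval_exp_le {σ : Type*} [Fintype σ]
    {w : σ → ℝ} (hw : Function.Injective (Finsupp.weight w : (σ →₀ ℕ) → ℝ))
    (p : MvPolynomial σ ℂ) {S : ℝ}
    (hS : ∀ t : ℝ, ‖eval (fun i => exp (↑(w i * t) * I)) p‖ ≤ S)
    {x : σ → ℂ} (hx : ∀ i, ‖x i‖ ≤ 1) : ‖eval x p‖ ≤ S := by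
  set D := p.totalDegree
  have key (k : ℕ) : (‖eval x p‖ ^ 2) ^ k
      ≤ (D + 1) ^ Fintype.card σ * (k + 1) ^ Fintype.card σ * (S ^ 2) ^ k := by
    set Q := p ^ k
    have hlow : ‖eval x p‖ ^ k ≤ ∑ d ∈ Q.support, ‖coeff d Q‖ := by
      simpa only [Q, map_pow, norm_pow] using norm_eval_le_sum_norm_coeff Q hx
    have hmean : ∑ d ∈ Q.support, ‖coeff d Q‖ ^ 2 ≤ (S ^ k) ^ 2 := by
      have := (hasMeanValue_norm_sq_sum_exp Q.support (coeff · Q) hw.injOn).re_le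
        (B := (S ^ k) ^ 2) (by fun_prop) fun t => by
          rw [← eval_exp_ofReal_mul_I_eq_sum, map_pow, norm_pow]
          gcongr
          exact hS t
      rwa [ofReal_re] at this
    have hcard : (#Q.support : ℝ) ≤ (D + 1) ^ Fintype.card σ * (k + 1) ^ Fintype.card σ := by
      rw [← mul_pow]
      have hdeg : Q.totalDegree ≤ k * D := totalDegree_pow p k
      exact_mod_cast (card_support_le_of_totalDegree_le hdeg).trans
        (Nat.pow_le_pow_left (by nlinarith) _)
    calc (‖eval x p‖ ^ 2) ^ k = (‖eval x p‖ ^ k) ^ 2 := by ring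
      _ ≤ (∑ d ∈ Q.support, ‖coeff d Q‖) ^ 2 := by gcongr
      _ ≤ #Q.support * ∑ d ∈ Q.support, ‖coeff d Q‖ ^ 2 := sq_sum_le_card_mul_sum_sq
      _ ≤ (D + 1) ^ Fintype.card σ * (k + 1) ^ Fintype.card σ * (S ^ k) ^ 2 := by gcongr
      _ = _ := by ring
  have hS0 : 0 ≤ S := (norm_nonneg _).trans (hS 0)
  exact (pow_le_pow_iff_left₀ (norm_nonneg _) hS0 two_ne_zero).1
    (le_of_forall_pow_le_mul_pow (by positivity) _ key)

theorem mul_exp_neg_arg_mul_I (z : ℂ) : z * exp (↑(-arg z) * I) = ‖z‖ := by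
  conv_lhs => rw [← norm_mul_exp_arg_mul_I z]
  rw [mul_assoc, ← exp_add]
  simp

theorem sum_norm_le_of_forall_norm_sum_le {Λ : ℕ → ℝ} (hind : LinearIndependent ℚ Λ)
    (A : Finset ℕ) (a : ℕ → ℂ) {S : ℝ}
    (hS : ∀ t : ℝ, ‖∑ n ∈ A, a n * exp (-(I * (Λ n * t)))‖ ≤ S) :
    ∑ n ∈ A, ‖a n‖ ≤ S := by
  set P : MvPolynomial A ℂ := ∑ i : A, C (a i) * X i
  have heval (x : A → ℂ) : eval x P = ∑ n ∈ A.attach, a n * x n := by simp [P]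
  have hphase :
      eval (fun i : A => exp (↑(-arg (a i)) * I)) P = ((∑ n ∈ A, ‖a n‖ : ℝ) : ℂ) := by
    rw [heval, ← A.sum_attach, ofReal_sum]
    exact Finset.sum_congr rfl fun i _ => mul_exp_neg_arg_mul_I _
  have hline (t : ℝ) : eval (fun i : A => exp (↑(Λ i * t) * I)) P
      = ∑ n ∈ A, a n * exp (-(I * (Λ n * ((-t : ℝ) : ℂ)))) := by
    rw [heval, ← A.sum_attach]
    refine Finset.sum_congr rfl fun i _ => ?_
    push_cast; ring_nf
  have := norm_eval_le_of_forall_norm_eval_exp_le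
    (hind.comp Subtype.val Subtype.val_injective).injective_weight P
    (fun t => (congrArg norm (hline t)).trans_le (hS (-t)))
    (x := fun i => exp (↑(-arg (a i)) * I)) fun i => (norm_exp_ofReal_mul_I _).le
  rwa [hphase, norm_real, Real.norm_of_nonneg (by positivity)] at this

theorem qlinIndep_Hinf_norm_general (Λ : ℕ → ℝ)
    (hind : LinearIndependent ℚ Λ) :
    ∀ (A : Finset ℕ) (a : ℕ → ℂ),
      dirichletSupNorm Λ A a = ∑ n ∈ A, ‖a n‖ := by
  intro A a
  have hle (t : ℝ) : ‖∑ n ∈ A, a n * exp (-(I * (Λ n * t)))‖ ≤ ∑ n ∈ A, ‖a n‖ := by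
    refine (norm_sum_le _ _).trans_eq (Finset.sum_congr rfl fun n _ => ?_)
    simp [norm_exp]
  exact le_antisymm (ciSup_le hle)
    (sum_norm_le_of_forall_norm_sum_le hind A a (le_ciSup ⟨_, Set.forall_mem_range.2 hle⟩))

/-- For a frequency `λ` whose terms are linearly independent over `ℚ`, the `H_∞^λ` norm of
any Dirichlet polynomial equals the `ℓ¹` norm of its coefficients. -/
theorem qlinIndep_Hinf_norm (Λ : ℕ → ℝ) (hmono : StrictMono Λ)
    (hpos : ∀ n, 0 ≤ Λ n) (hunb : Tendsto Λ atTop atTop)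
    (hind : LinearIndependent ℚ Λ) :
    ∀ (A : Finset ℕ) (a : ℕ → ℂ),
      dirichletSupNorm Λ A a = ∑ n ∈ A, ‖a n‖ :=
  qlinIndep_Hinf_norm_general Λ hind
end

section
/- Let λ be a frequency and fix 1 ≤ p < ∞. Suppose there exists a constant C ≥ 1 such that for every finite set A ⊆ ℕ, all complex coefficients (a_n)_{n∈A} and all unimodular (w_n)_{n∈A}: ‖∑_{n∈A} w_n a_n e^{-λ_n s}‖_{H_p^λ} ≤ C·‖∑_{n∈A} a_n e^{-λ_n s}‖_{H_p^λ}. Then there exist constants c', C' > 0 such that for every finite set A ⊆ ℕ and all complex (a_n)_{n∈A}: c'·(∑_{n∈A} |a_n|²)^{1/2} ≤ ‖∑_{n∈A} a_n e^{-λ_n s}‖_{H_p^λ} ≤ C'·(∑_{n∈A} |a_n|²)^{1/2}. (That is, if the canonical basis {e^{-λ_n s}} is unconditional in H_p^λ, then the H_p^λ-norm of Dirichlet polynomials is equivalent to the H_2^λ-norm.) -/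
open MeasureTheory Filter Finset

/-- The `H_p^λ` norm of the `λ`-Dirichlet polynomial `∑_{n∈A} a_n e^{-λ_n s}`, i.e.
`lim_{R→∞} M_{p,R}((a_n))`, expressed via `liminf` (these coincide under the standing
assumption that the limit exists). -/
noncomputable def dirichletHpNorm (Λ : ℕ → ℝ) (p : ℝ) (A : Finset ℕ) (a : ℕ → ℂ) : ℝ :=
  liminf (dirichletMpR Λ p A a) atTop

open scoped ComplexConjugate Nat

/-!
Average over all weights `w_n = ζ ^ σ(n)`, `σ : A → {0, …, q-1}`, with `ζ` a primitive
`q`-th root of unity. For `m < q` these weights are orthogonal up to degree `m`, which gives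
Khintchine-type bounds on the moments of order `2`, `4` and `2m` of `∑ w_n b_n` in terms of
`∑ |b_n|²`, hence on its `p`-th moment. Apply them for each `t` to `b_n = a_n e^{-iλ_n t}`,
which has `|b_n| = |a_n|`, integrate over `[-R, R]` and let `R → ∞`: the average over `σ`
of `‖∑ w_n a_n e^{-λ_n s}‖_p^p` is comparable to `(∑ |a_n|²)^{p/2}`. So some weight gives
a norm at least `c √(∑ |a_n|²)` and some weight a norm at most `C √(∑ |a_n|²)`, and
unconditionality transfers both bounds to the unweighted polynomial.
-/

theorem Finset.sum_pi_insert {α M : Type*} {β : α → Type*} [DecidableEq α]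
    [∀ a, DecidableEq (β a)] [AddCommMonoid M] {k : α} {A : Finset α} (hk : k ∉ A)
    (t : ∀ a, Finset (β a)) (f : (∀ a ∈ insert k A, β a) → M) :
    ∑ σ ∈ (insert k A).pi t, f σ
      = ∑ c ∈ t k, ∑ σ ∈ A.pi t, f (Pi.cons A k c σ) := by
  rw [pi_insert hk, sum_biUnion]
  · exact sum_congr rfl fun c _ => sum_image fun σ₁ _ σ₂ _ h => Pi.cons_injective hk h
  · intro c₁ _ c₂ _ hne
    simp only [Function.onFun, disjoint_left, mem_image]
    rintro _ ⟨σ₁, _, rfl⟩ ⟨σ₂, _, h⟩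
    exact hne (by simpa using (congr_fun₂ h k (mem_insert_self k A)).symm)

theorem Nat.choose_mul_factorial_sub_le {n k : ℕ} (hk : k ≤ n) :
    n.choose k * (n - k)! ≤ n ! := by
  rw [← Nat.choose_mul_factorial_mul_factorial hk, mul_right_comm]
  exact Nat.le_mul_of_pos_right _ k.factorial_pos

section PowerSums
variable {ι : Type*} {S : Finset ι} {f : ι → ℝ}

/-- Cauchy–Schwarz for `f² = √f · f^{3/2}` and for `f³ = f · f²`. -/
theorem sum_sq_pow_three_le (hf : ∀ i ∈ S, 0 ≤ f i) :
    (∑ i ∈ S, f i ^ 2) ^ 3 ≤ (∑ i ∈ S, f i) ^ 2 * ∑ i ∈ S, f i ^ 4 := by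
  have h₁ : (∑ i ∈ S, f i ^ 2) ^ 2 ≤ (∑ i ∈ S, f i) * ∑ i ∈ S, f i ^ 3 := by
    calc (∑ i ∈ S, f i ^ 2) ^ 2 = (∑ i ∈ S, √(f i) * (f i * √(f i))) ^ 2 := by
          congr 1
          refine sum_congr rfl fun i hi => ?_
          rw [mul_left_comm, Real.mul_self_sqrt (hf i hi), sq]
      _ ≤ (∑ i ∈ S, √(f i) ^ 2) * ∑ i ∈ S, (f i * √(f i)) ^ 2 :=
          sum_mul_sq_le_sq_mul_sq _ _ _
      _ = (∑ i ∈ S, f i) * ∑ i ∈ S, f i ^ 3 := by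
          congr 1 <;> refine sum_congr rfl fun i hi => ?_
          · rw [Real.sq_sqrt (hf i hi)]
          · rw [mul_pow, Real.sq_sqrt (hf i hi)]; ring
  have h₂ : (∑ i ∈ S, f i ^ 3) ^ 2 ≤ (∑ i ∈ S, f i ^ 2) * ∑ i ∈ S, f i ^ 4 := by
    calc (∑ i ∈ S, f i ^ 3) ^ 2 = (∑ i ∈ S, f i * f i ^ 2) ^ 2 := by
          congr 1; exact sum_congr rfl fun i _ => by ring
      _ ≤ (∑ i ∈ S, f i ^ 2) * ∑ i ∈ S, (f i ^ 2) ^ 2 := sum_mul_sq_le_sq_mul_sq _ _ _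
      _ = (∑ i ∈ S, f i ^ 2) * ∑ i ∈ S, f i ^ 4 := by
          congr 1; exact sum_congr rfl fun i _ => by ring
  have hb : 0 ≤ ∑ i ∈ S, f i ^ 2 := sum_nonneg fun i _ => sq_nonneg _
  rcases hb.eq_or_lt with hb0 | hbpos
  · rw [← hb0, zero_pow three_ne_zero]
    exact mul_nonneg (sq_nonneg _) (sum_nonneg fun i _ => by positivity)
  · refine le_of_mul_le_mul_left ?_ hbpos
    nlinarith [mul_le_mul_of_nonneg_left h₂ (sq_nonneg (∑ i ∈ S, f i)),
      pow_le_pow_left₀ (sq_nonneg _) h₁ 2]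

theorem card_mul_rpow_le_sum_rpow (hf : ∀ i ∈ S, 0 ≤ f i) {p L : ℝ} (hp : 1 ≤ p)
    (hL : 0 ≤ L) (h : #S * L ≤ ∑ i ∈ S, f i) : #S * L ^ p ≤ ∑ i ∈ S, f i ^ p := by
  rcases S.eq_empty_or_nonempty with rfl | hS
  · simp
  have hN : (0 : ℝ) < #S := by exact_mod_cast hS.card_pos
  refine le_of_mul_le_mul_left ?_ (Real.rpow_pos_of_pos hN (p - 1))
  calc (#S : ℝ) ^ (p - 1) * (#S * L ^ p) = (#S * L) ^ p := by
        rw [Real.mul_rpow hN.le hL, Real.rpow_sub_one hN.ne']; field_simp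
    _ ≤ (∑ i ∈ S, f i) ^ p := by gcongr
    _ ≤ (#S : ℝ) ^ (p - 1) * ∑ i ∈ S, f i ^ p :=
        Real.rpow_sum_le_const_mul_sum_rpow_of_nonneg S hp hf

theorem sum_rpow_le_card_mul_rpow (hf : ∀ i ∈ S, 0 ≤ f i) {p U : ℝ} {r : ℕ} (hp : 0 < p)
    (hpr : p ≤ r) (hU : 0 ≤ U) (h : ∑ i ∈ S, f i ^ r ≤ #S * U ^ r) :
    ∑ i ∈ S, f i ^ p ≤ #S * U ^ p := by
  rcases S.eq_empty_or_nonempty with rfl | hS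
  · simp
  have hN : (0 : ℝ) < #S := by exact_mod_cast hS.card_pos
  have hs : 1 ≤ r / p := by rwa [one_le_div hp]
  have hpow (x : ℝ) (hx : 0 ≤ x) : (x ^ p) ^ (r / p) = x ^ r := by
    rw [← Real.rpow_mul hx, mul_div_cancel₀ _ hp.ne', Real.rpow_natCast]
  have hJensen := Real.rpow_sum_le_const_mul_sum_rpow_of_nonneg S (f := fun i => f i ^ p) hs
    (fun i hi => Real.rpow_nonneg (hf i hi) p)
  rw [sum_congr rfl fun i hi => hpow (f i) (hf i hi)] at hJensen
  rw [← Real.rpow_le_rpow_iff (sum_nonneg fun i hi => Real.rpow_nonneg (hf i hi) p)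
    (by positivity) (by positivity : 0 < r / p)]
  calc (∑ i ∈ S, f i ^ p) ^ (r / p) ≤ (#S : ℝ) ^ (r / p - 1) * (#S * U ^ r) :=
        hJensen.trans (by gcongr)
    _ = (#S * U ^ p) ^ (r / p) := by
        rw [Real.mul_rpow hN.le (by positivity), hpow U hU, Real.rpow_sub_one hN.ne']
        field_simp

theorem exists_le_of_card_mul_rpow_le_sum_rpow (hS : S.Nonempty) (hf : ∀ i ∈ S, 0 ≤ f i)
    {p L : ℝ} (hp : 0 < p) (hL : 0 ≤ L) (h : #S * L ^ p ≤ ∑ i ∈ S, f i ^ p) :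
    ∃ i ∈ S, L ≤ f i := by
  rw [← nsmul_eq_mul, ← sum_const] at h
  obtain ⟨i, hi, hLi⟩ := exists_le_of_sum_le hS h
  exact ⟨i, hi, (Real.rpow_le_rpow_iff hL (hf i hi) hp).mp hLi⟩

theorem exists_le_of_sum_rpow_le_card_mul_rpow (hS : S.Nonempty) (hf : ∀ i ∈ S, 0 ≤ f i)
    {p U : ℝ} (hp : 0 < p) (hU : 0 ≤ U) (h : ∑ i ∈ S, f i ^ p ≤ #S * U ^ p) :
    ∃ i ∈ S, f i ≤ U := by
  rw [← nsmul_eq_mul, ← sum_const] at h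
  obtain ⟨i, hi, hiU⟩ := exists_le_of_sum_le hS h
  exact ⟨i, hi, (Real.rpow_le_rpow_iff (hf i hi) hU hp).mp hiU⟩

end PowerSums

/-- Set to `1` off `A`, so that it is unimodular on all of `ℕ`. -/
noncomputable def rootWeight (ζ : ℂ) (A : Finset ℕ) (σ : ∀ n ∈ A, ℕ) (n : ℕ) : ℂ :=
  if h : n ∈ A then ζ ^ σ n h else 1

lemma norm_rootWeight {ζ : ℂ} (hζ : ‖ζ‖ = 1) (A : Finset ℕ) (σ : ∀ n ∈ A, ℕ)
    (n : ℕ) : ‖rootWeight ζ A σ n‖ = 1 := by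
  unfold rootWeight; split_ifs <;> simp [hζ]

lemma sum_rootWeight_cons (ζ : ℂ) {k c : ℕ} {A : Finset ℕ} (hk : k ∉ A)
    (σ : ∀ n ∈ A, ℕ) (b : ℕ → ℂ) :
    ∑ n ∈ insert k A, rootWeight ζ (insert k A) (Pi.cons A k c σ) n * b n
      = ∑ n ∈ A, rootWeight ζ A σ n * b n + ζ ^ c * b k := by
  rw [sum_insert hk, add_comm]
  congr 1
  · refine sum_congr rfl fun n hn => ?_
    have hkn : k ≠ n := fun h => hk (h ▸ hn)
    simp [rootWeight, hn, Pi.cons_ne hkn]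
  · simp [rootWeight, Pi.cons_same]

lemma sum_pi_insert_rootWeight {M : Type*} [AddCommMonoid M] (ζ : ℂ) {k : ℕ}
    {A : Finset ℕ} (hk : k ∉ A) (t : Finset ℕ) (b : ℕ → ℂ) (F : ℂ → M) :
    ∑ σ ∈ (insert k A).pi (fun _ => t),
        F (∑ n ∈ insert k A, rootWeight ζ (insert k A) σ n * b n)
      = ∑ σ ∈ A.pi (fun _ => t), ∑ c ∈ t,
          F (∑ n ∈ A, rootWeight ζ A σ n * b n + ζ ^ c * b k) := by
  rw [sum_pi_insert hk, sum_comm]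
  simp_rw [sum_rootWeight_cons ζ hk]

namespace IsPrimitiveRoot
variable {ζ : ℂ} {q : ℕ}

theorem sum_pow_mul_conj_pow (hζ : IsPrimitiveRoot ζ q) {i j : ℕ} (hi : i < q) (hj : j < q) :
    ∑ c ∈ range q, (ζ ^ c) ^ i * conj ((ζ ^ c) ^ j) = if i = j then (q : ℂ) else 0 := by
  have hq : q ≠ 0 := by omega
  have hζ0 : ζ ≠ 0 := hζ.ne_zero hq
  set r := ζ ^ ((i : ℤ) - j) with hr
  have hterm (c : ℕ) : (ζ ^ c) ^ i * conj ((ζ ^ c) ^ j) = r ^ c := by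
    rw [← Complex.inv_eq_conj (by simp [hζ.norm'_eq_one hq]), hr]
    simp only [← zpow_natCast, ← zpow_mul, ← zpow_neg, ← zpow_add₀ hζ0]
    ring_nf
  have hrq : r ^ q = 1 := by
    rw [hr, ← zpow_natCast, ← zpow_mul, mul_comm, zpow_mul, zpow_natCast, hζ.pow_eq_one,
      one_zpow]
  simp_rw [hterm]
  split_ifs with hij
  · simp [hr, hij]
  · have hr1 : r ≠ 1 := by
      rw [hr, ne_eq, hζ.zpow_eq_one_iff_dvd]
      intro hdvd
      have := Int.eq_zero_of_abs_lt_dvd hdvd (by rw [abs_lt]; omega)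
      omega
    rw [geom_sum_eq hr1, hrq, sub_self, zero_div]

/-- Parseval's identity for the discrete Fourier transform of length `q`. -/
theorem sum_norm_sum_mul_pow_sq (hζ : IsPrimitiveRoot ζ q) {n : ℕ} (hn : n ≤ q)
    (u : ℕ → ℂ) :
    ∑ c ∈ range q, ‖∑ j ∈ range n, u j * (ζ ^ c) ^ j‖ ^ 2
      = q * ∑ j ∈ range n, ‖u j‖ ^ 2 := by
  apply Complex.ofReal_injective
  push_cast
  simp_rw [← Complex.mul_conj', map_sum, map_mul, sum_mul_sum]
  rw [sum_comm, mul_sum]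
  refine sum_congr rfl fun i hi => ?_
  rw [sum_comm]
  have hiq : i < q := by simp at hi; omega
  have hinner : ∀ j ∈ range n,
      ∑ c ∈ range q, u i * (ζ ^ c) ^ i * (conj (u j) * conj ((ζ ^ c) ^ j))
        = if i = j then q * (u i * conj (u j)) else 0 := by
    intro j hj
    have hjq : j < q := by simp at hj; omega
    rw [sum_congr rfl fun c _ => mul_mul_mul_comm (u i) _ (conj (u j)) _, ← mul_sum,
      hζ.sum_pow_mul_conj_pow hiq hjq]
    split_ifs <;> ring
  rw [sum_congr rfl hinner, sum_ite_eq, if_pos hi]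

theorem sum_norm_add_mul_pow (hζ : IsPrimitiveRoot ζ q) {m : ℕ} (hm : m < q) (x a : ℂ) :
    ∑ c ∈ range q, ‖x + ζ ^ c * a‖ ^ (2 * m)
      = q * ∑ j ∈ range (m + 1),
          (m.choose j : ℝ) ^ 2 * ‖x‖ ^ (2 * (m - j)) * ‖a‖ ^ (2 * j) := by
  have hbinom (c : ℕ) : ‖x + ζ ^ c * a‖ ^ (2 * m)
      = ‖∑ j ∈ range (m + 1), a ^ j * x ^ (m - j) * m.choose j * (ζ ^ c) ^ j‖ ^ 2 := by
    rw [mul_comm 2 m, pow_mul, ← norm_pow, add_comm, add_pow]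
    congr 2
    exact sum_congr rfl fun j _ => by ring
  rw [sum_congr rfl fun c _ => hbinom c, hζ.sum_norm_sum_mul_pow_sq (by omega)]
  congr 1
  refine sum_congr rfl fun j _ => ?_
  simp only [norm_mul, norm_pow, Complex.norm_natCast]
  ring

theorem sum_norm_sum_rootWeight_sq (hζ : IsPrimitiveRoot ζ q) (hq : 1 < q) (A : Finset ℕ)
    (b : ℕ → ℂ) :
    ∑ σ ∈ A.pi (fun _ => range q), ‖∑ n ∈ A, rootWeight ζ A σ n * b n‖ ^ 2
      = q ^ #A * ∑ n ∈ A, ‖b n‖ ^ 2 := by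
  induction A using Finset.induction_on with
  | empty => simp
  | insert k A hk ih =>
    have hmoment (x : ℂ) :
        ∑ c ∈ range q, ‖x + ζ ^ c * b k‖ ^ 2 = q * (‖x‖ ^ 2 + ‖b k‖ ^ 2) := by
      simpa [sum_range_succ] using hζ.sum_norm_add_mul_pow hq x (b k)
    rw [sum_pi_insert_rootWeight ζ hk _ b (‖·‖ ^ 2)]
    simp_rw [hmoment, ← mul_sum, sum_add_distrib, ih, sum_const,
      card_pi, prod_const, card_range, sum_insert hk, card_insert_of_notMem hk]
    simp only [nsmul_eq_mul, Nat.cast_pow]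
    ring

theorem sum_norm_sum_rootWeight_pow_le (hζ : IsPrimitiveRoot ζ q) (A : Finset ℕ) {m : ℕ}
    (hm : m < q) (b : ℕ → ℂ) :
    ∑ σ ∈ A.pi (fun _ => range q), ‖∑ n ∈ A, rootWeight ζ A σ n * b n‖ ^ (2 * m)
      ≤ q ^ #A * m ! * (∑ n ∈ A, ‖b n‖ ^ 2) ^ m := by
  induction A using Finset.induction_on generalizing m with
  | empty => cases m <;> simp
  | insert k A hk ih =>
    set T := ∑ n ∈ A, ‖b n‖ ^ 2
    set S := A.pi (fun _ => range q)
    rw [sum_pi_insert_rootWeight ζ hk _ b (‖·‖ ^ (2 * m))]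
    simp_rw [hζ.sum_norm_add_mul_pow hm]
    calc ∑ σ ∈ S, q * ∑ j ∈ range (m + 1), (m.choose j : ℝ) ^ 2
            * ‖∑ n ∈ A, rootWeight ζ A σ n * b n‖ ^ (2 * (m - j)) * ‖b k‖ ^ (2 * j)
        = q * ∑ j ∈ range (m + 1), (m.choose j : ℝ) ^ 2 * (‖b k‖ ^ 2) ^ j
            * ∑ σ ∈ S, ‖∑ n ∈ A, rootWeight ζ A σ n * b n‖ ^ (2 * (m - j)) := by
          rw [← mul_sum, sum_comm]
          congr 1
          refine sum_congr rfl fun j _ => ?_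
          rw [mul_sum]
          exact sum_congr rfl fun σ _ => by ring
      _ ≤ q * ∑ j ∈ range (m + 1), (m.choose j : ℝ) ^ 2 * (‖b k‖ ^ 2) ^ j
            * (q ^ #A * (m - j)! * T ^ (m - j)) := by
          gcongr with j hj
          exact ih (by omega)
      _ ≤ q * ∑ j ∈ range (m + 1),
            q ^ #A * m ! * ((‖b k‖ ^ 2) ^ j * T ^ (m - j) * m.choose j) := by
          refine mul_le_mul_of_nonneg_left (sum_le_sum fun j hj => ?_) (by positivity)
          have hchoose : (m.choose j * (m - j)! : ℝ) ≤ m ! :=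
            mod_cast Nat.choose_mul_factorial_sub_le (by simp at hj; omega)
          calc (m.choose j : ℝ) ^ 2 * (‖b k‖ ^ 2) ^ j * (q ^ #A * (m - j)! * T ^ (m - j))
              = (m.choose j * (m - j)! : ℝ)
                  * (q ^ #A * ((‖b k‖ ^ 2) ^ j * T ^ (m - j) * m.choose j)) := by ring
            _ ≤ m ! * (q ^ #A * ((‖b k‖ ^ 2) ^ j * T ^ (m - j) * m.choose j)) := by gcongr
            _ = _ := by ring
      _ = q ^ #(insert k A) * m ! * (∑ n ∈ insert k A, ‖b n‖ ^ 2) ^ m := by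
          rw [← mul_sum, sum_insert hk, card_insert_of_notMem hk, add_pow]
          ring

/-- Khintchine's lower bound, from the moments of order `2` and `4`. -/
theorem card_mul_rpow_le_sum_norm_rootWeight_rpow (hζ : IsPrimitiveRoot ζ q) (hq : 2 < q)
    {p : ℝ} (hp : 1 ≤ p) (A : Finset ℕ) (b : ℕ → ℂ) :
    #(A.pi fun _ => range q) * (√(∑ n ∈ A, ‖b n‖ ^ 2) / 2) ^ p
      ≤ ∑ σ ∈ A.pi (fun _ => range q),
          ‖∑ n ∈ A, rootWeight ζ A σ n * b n‖ ^ p := by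
  set T := ∑ n ∈ A, ‖b n‖ ^ 2
  set N : ℝ := ((#(A.pi fun _ => range q) : ℕ) : ℝ)
  set f := fun σ => ‖∑ n ∈ A, rootWeight ζ A σ n * b n‖
  have hT : 0 ≤ T := by positivity
  have hN : 0 < N := by simp [N]; positivity
  have hf : ∀ σ ∈ A.pi (fun _ => range q), 0 ≤ f σ := fun σ _ => norm_nonneg _
  refine card_mul_rpow_le_sum_rpow hf hp (by positivity) ?_
  have h2 : ∑ σ ∈ A.pi (fun _ => range q), f σ ^ 2 = N * T := by
    simpa [N] using hζ.sum_norm_sum_rootWeight_sq (by omega) A b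
  have h4 : ∑ σ ∈ A.pi (fun _ => range q), f σ ^ 4 ≤ N * (2 * T ^ 2) := by
    simpa [N, mul_assoc] using hζ.sum_norm_sum_rootWeight_pow_le A hq b
  have hmoments := (sum_sq_pow_three_le hf).trans (mul_le_mul_of_nonneg_left h4 (sq_nonneg _))
  rw [h2] at hmoments
  set F := ∑ σ ∈ A.pi (fun _ => range q), f σ
  rcases hT.eq_or_lt with hT0 | hTpos
  · simpa [← hT0] using sum_nonneg hf
  have hsq : N ^ 2 * T ≤ 2 * F ^ 2 := by
    refine le_of_mul_le_mul_left ?_ (by positivity : 0 < N * T ^ 2)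
    calc N * T ^ 2 * (N ^ 2 * T) = (N * T) ^ 3 := by ring
      _ ≤ F ^ 2 * (N * (2 * T ^ 2)) := hmoments
      _ = N * T ^ 2 * (2 * F ^ 2) := by ring
  refine (pow_le_pow_iff_left₀ (by positivity) (sum_nonneg hf) two_ne_zero).mp ?_
  rw [mul_pow, div_pow, Real.sq_sqrt hT]
  nlinarith

/-- Khintchine's upper bound, from the moment of order `2m`. -/
theorem sum_norm_rootWeight_rpow_le (hζ : IsPrimitiveRoot ζ q) {m : ℕ} (hm : m < q) {p : ℝ}
    (hp : 0 < p) (hpm : p ≤ 2 * m) (A : Finset ℕ) (b : ℕ → ℂ) :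
    ∑ σ ∈ A.pi (fun _ => range q), ‖∑ n ∈ A, rootWeight ζ A σ n * b n‖ ^ p
      ≤ #(A.pi fun _ => range q)
        * ((m ! : ℝ) ^ ((2 * m : ℕ) : ℝ)⁻¹ * √(∑ n ∈ A, ‖b n‖ ^ 2)) ^ p := by
  have hm0 : 2 * m ≠ 0 := by exact_mod_cast (hp.trans_le hpm).ne'
  refine sum_rpow_le_card_mul_rpow (fun _ _ => norm_nonneg _) hp (r := 2 * m)
    (by exact_mod_cast hpm) (by positivity) ?_
  rw [mul_pow, Real.rpow_inv_natCast_pow (by positivity) hm0, pow_mul,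
    Real.sq_sqrt (by positivity), card_pi, prod_const, card_range, Nat.cast_pow, ← mul_assoc]
  exact hζ.sum_norm_sum_rootWeight_pow_le A hm b

end IsPrimitiveRoot

section Dirichlet
variable {Λ : ℕ → ℝ} {p : ℝ} {A : Finset ℕ}

theorem continuous_norm_dirichletSum_rpow (Λ : ℕ → ℝ) (hp : 0 ≤ p) (A : Finset ℕ)
    (a : ℕ → ℂ) :
    Continuous fun t : ℝ =>
      ‖∑ n ∈ A, a n * Complex.exp (-(Complex.I * (Λ n * t)))‖ ^ p := by
  have : Continuous fun t : ℝ =>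
      ‖∑ n ∈ A, a n * Complex.exp (-(Complex.I * (Λ n * t)))‖ := by
    fun_prop
  exact this.rpow_const fun _ => Or.inr hp

theorem intervalAverage_mem_Icc {g : ℝ → ℝ} (hg : Continuous g) {L U R : ℝ} (hR : 0 < R)
    (h : ∀ t, g t ∈ Set.Icc L U) : (1 / (2 * R)) * ∫ t in (-R)..R, g t ∈ Set.Icc L U := by
  have hRR : -R ≤ R := by linarith
  have hconst (c : ℝ) : (1 / (2 * R)) * ∫ _ in (-R)..R, c = c := by
    rw [intervalIntegral.integral_const, smul_eq_mul]; field_simp; ring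
  constructor
  · calc L = (1 / (2 * R)) * ∫ _ in (-R)..R, L := (hconst L).symm
      _ ≤ _ := by
        gcongr
        exact intervalIntegral.integral_mono_on hRR intervalIntegrable_const
          (hg.intervalIntegrable _ _) fun t _ => (h t).1
  · calc _ ≤ (1 / (2 * R)) * ∫ _ in (-R)..R, U := by
          gcongr
          exact intervalIntegral.integral_mono_on hRR (hg.intervalIntegrable _ _)
            intervalIntegrable_const fun t _ => (h t).2
      _ = U := hconst U

theorem dirichletMpR_rpow (hp : 0 < p) (a : ℕ → ℂ) {R : ℝ} (hR : 0 < R) :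
    dirichletMpR Λ p A a R ^ p = (1 / (2 * R)) * ∫ t in (-R)..R,
      ‖∑ n ∈ A, a n * Complex.exp (-(Complex.I * (Λ n * t)))‖ ^ p := by
  rw [dirichletMpR, one_div p]
  refine Real.rpow_inv_rpow (mul_nonneg (by positivity) ?_) hp.ne'
  exact intervalIntegral.integral_nonneg (by linarith) fun t _ => by positivity

theorem dirichletHpNorm_nonneg {a : ℕ → ℂ}
    (hlim : Tendsto (dirichletMpR Λ p A a) atTop (nhds (dirichletHpNorm Λ p A a))) :
    0 ≤ dirichletHpNorm Λ p A a :=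
  ge_of_tendsto hlim <| eventually_gt_atTop 0 |>.mono fun R hR =>
    Real.rpow_nonneg (mul_nonneg (by positivity) <|
      intervalIntegral.integral_nonneg (by linarith) fun t _ => by positivity) _

theorem sum_dirichletHpNorm_rpow_mem_Icc {ι : Type*} (S : Finset ι) (b : ι → ℕ → ℂ)
    (hp : 0 < p) (hlim : ∀ i ∈ S,
      Tendsto (dirichletMpR Λ p A (b i)) atTop (nhds (dirichletHpNorm Λ p A (b i))))
    {L U : ℝ} (h : ∀ t : ℝ, ∑ i ∈ S,
      ‖∑ n ∈ A, b i n * Complex.exp (-(Complex.I * (Λ n * t)))‖ ^ p ∈ Set.Icc L U) :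
    ∑ i ∈ S, dirichletHpNorm Λ p A (b i) ^ p ∈ Set.Icc L U := by
  refine isClosed_Icc.mem_of_tendsto
    (tendsto_finsetSum S fun i hi => (hlim i hi).rpow_const (Or.inr hp.le)) ?_
  filter_upwards [eventually_gt_atTop 0] with R hR
  rw [sum_congr rfl fun i _ => dirichletMpR_rpow hp (b i) hR, ← mul_sum,
    ← intervalIntegral.integral_finsetSum fun i _ =>
      (continuous_norm_dirichletSum_rpow Λ hp.le A (b i)).intervalIntegrable _ _]
  exact intervalAverage_mem_Icc (continuous_finsetSum S fun i _ =>
    continuous_norm_dirichletSum_rpow Λ hp.le A (b i)) hR h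

theorem dirichletHpNorm_le_of_unconditional {C : ℝ}
    (huncond : ∀ (A : Finset ℕ) (a w : ℕ → ℂ), (∀ n ∈ A, ‖w n‖ = 1) →
      dirichletHpNorm Λ p A (fun n => w n * a n) ≤ C * dirichletHpNorm Λ p A a)
    (a w : ℕ → ℂ) (hw : ∀ n, ‖w n‖ = 1) :
    dirichletHpNorm Λ p A a ≤ C * dirichletHpNorm Λ p A (fun n => w n * a n) := by
  have hconj (n : ℕ) : conj (w n) * (w n * a n) = a n := by
    rw [← mul_assoc, mul_comm (conj _), Complex.mul_conj', hw n]; simp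
  simpa only [hconj] using
    huncond A (fun n => w n * a n) (fun n => conj (w n)) fun n _ => by simp [hw n]

end Dirichlet

namespace IsPrimitiveRoot
variable {ζ : ℂ} {q m : ℕ} {Λ : ℕ → ℝ} {p : ℝ}

theorem sum_dirichletHpNorm_rootWeight_rpow_mem_Icc (hζ : IsPrimitiveRoot ζ q) (hq : 2 < q)
    (hm : m < q) (hp : 1 ≤ p) (hpm : p ≤ 2 * m) (hlim : ∀ (A : Finset ℕ) (a : ℕ → ℂ),
      Tendsto (dirichletMpR Λ p A a) atTop (nhds (dirichletHpNorm Λ p A a)))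
    (A : Finset ℕ) (a : ℕ → ℂ) :
    ∑ σ ∈ A.pi (fun _ => range q),
        dirichletHpNorm Λ p A (fun n => rootWeight ζ A σ n * a n) ^ p
      ∈ Set.Icc (#(A.pi fun _ => range q) * (√(∑ n ∈ A, ‖a n‖ ^ 2) / 2) ^ p)
        (#(A.pi fun _ => range q)
          * ((m ! : ℝ) ^ ((2 * m : ℕ) : ℝ)⁻¹ * √(∑ n ∈ A, ‖a n‖ ^ 2)) ^ p) := by
  refine sum_dirichletHpNorm_rpow_mem_Icc _ _ (by linarith) (fun σ _ => hlim A _) fun t => ?_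
  have hcoeff : ∑ n ∈ A, ‖a n * Complex.exp (-(Complex.I * (Λ n * t)))‖ ^ 2
      = ∑ n ∈ A, ‖a n‖ ^ 2 := by
    simp [Complex.norm_exp]
  simp_rw [mul_assoc, ← hcoeff]
  exact ⟨hζ.card_mul_rpow_le_sum_norm_rootWeight_rpow hq hp A _,
    hζ.sum_norm_rootWeight_rpow_le hm (by linarith) hpm A _⟩

theorem exists_dirichletHpNorm_rootWeight_bounds (hζ : IsPrimitiveRoot ζ q) (hq : 2 < q)
    (hm : m < q) (hp : 1 ≤ p) (hpm : p ≤ 2 * m) (hlim : ∀ (A : Finset ℕ) (a : ℕ → ℂ),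
      Tendsto (dirichletMpR Λ p A a) atTop (nhds (dirichletHpNorm Λ p A a)))
    (A : Finset ℕ) (a : ℕ → ℂ) :
    ∃ σ₁ σ₂ : ∀ n ∈ A, ℕ,
      √(∑ n ∈ A, ‖a n‖ ^ 2) / 2
        ≤ dirichletHpNorm Λ p A (fun n => rootWeight ζ A σ₁ n * a n) ∧
      dirichletHpNorm Λ p A (fun n => rootWeight ζ A σ₂ n * a n)
        ≤ (m ! : ℝ) ^ ((2 * m : ℕ) : ℝ)⁻¹ * √(∑ n ∈ A, ‖a n‖ ^ 2) := by
  have hS : (A.pi fun _ => range q).Nonempty := pi_nonempty.mpr fun _ _ => ⟨0, by simp; omega⟩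
  have hnonneg : ∀ σ ∈ A.pi (fun _ => range q),
      0 ≤ dirichletHpNorm Λ p A (fun n => rootWeight ζ A σ n * a n) :=
    fun σ _ => dirichletHpNorm_nonneg (hlim A _)
  obtain ⟨hlow, hup⟩ := hζ.sum_dirichletHpNorm_rootWeight_rpow_mem_Icc hq hm hp hpm hlim A a
  obtain ⟨σ₁, -, h₁⟩ :=
    exists_le_of_card_mul_rpow_le_sum_rpow hS hnonneg (by linarith) (by positivity) hlow
  obtain ⟨σ₂, -, h₂⟩ :=
    exists_le_of_sum_rpow_le_card_mul_rpow hS hnonneg (by linarith) (by positivity) hup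
  exact ⟨σ₁, σ₂, h₁, h₂⟩

end IsPrimitiveRoot

theorem unconditional_implies_H2_general (Λ : ℕ → ℝ)
    (p : ℝ) (hp : 1 ≤ p)
    (hlim : ∀ (A : Finset ℕ) (a : ℕ → ℂ),
      Tendsto (dirichletMpR Λ p A a) atTop (nhds (dirichletHpNorm Λ p A a)))
    (C : ℝ) (hC : 1 ≤ C)
    (huncond : ∀ (A : Finset ℕ) (a w : ℕ → ℂ), (∀ n ∈ A, ‖w n‖ = 1) →
      dirichletHpNorm Λ p A (fun n => w n * a n) ≤ C * dirichletHpNorm Λ p A a) :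
    ∃ c' C' : ℝ, 0 < c' ∧ 0 < C' ∧ ∀ (A : Finset ℕ) (a : ℕ → ℂ),
      c' * Real.sqrt (∑ n ∈ A, ‖a n‖ ^ 2) ≤ dirichletHpNorm Λ p A a ∧
        dirichletHpNorm Λ p A a ≤ C' * Real.sqrt (∑ n ∈ A, ‖a n‖ ^ 2) := by
  set m := ⌈p⌉₊ + 2
  have hpm : p ≤ 2 * m := by have := Nat.le_ceil p; push_cast [m]; linarith
  set ζ := Complex.exp (2 * Real.pi * Complex.I / (m + 1 : ℕ))
  have hζ : IsPrimitiveRoot ζ (m + 1) := Complex.isPrimitiveRoot_exp (m + 1) m.succ_ne_zero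
  set K : ℝ := (m ! : ℝ) ^ ((2 * m : ℕ) : ℝ)⁻¹
  refine ⟨(2 * C)⁻¹, C * K, by positivity, by positivity, fun A a => ?_⟩
  obtain ⟨σ₁, σ₂, h₁, h₂⟩ :=
    hζ.exists_dirichletHpNorm_rootWeight_bounds (by omega) (lt_add_one m) hp hpm hlim A a
  have hunit := norm_rootWeight (hζ.norm'_eq_one m.succ_ne_zero) A
  constructor
  · calc (2 * C)⁻¹ * √(∑ n ∈ A, ‖a n‖ ^ 2)
        = C⁻¹ * (√(∑ n ∈ A, ‖a n‖ ^ 2) / 2) := by ring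
      _ ≤ C⁻¹ * dirichletHpNorm Λ p A (fun n => rootWeight ζ A σ₁ n * a n) := by gcongr
      _ ≤ dirichletHpNorm Λ p A a := by
        rw [inv_mul_le_iff₀ (by linarith)]
        exact huncond A a _ fun n _ => hunit σ₁ n
  · calc dirichletHpNorm Λ p A a
        ≤ C * dirichletHpNorm Λ p A (fun n => rootWeight ζ A σ₂ n * a n) :=
          dirichletHpNorm_le_of_unconditional huncond a _ (hunit σ₂)
      _ ≤ C * K * √(∑ n ∈ A, ‖a n‖ ^ 2) := by rw [mul_assoc]; gcongr

/-- If the canonical basis `{e^{-λ_n s}}` is unconditional in `H_p^λ`, then on Dirichlet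
polynomials the `H_p^λ` norm is equivalent to the `H_2^λ` norm `(∑|a_n|²)^{1/2}`. -/
theorem unconditional_implies_H2 (Λ : ℕ → ℝ) (hmono : StrictMono Λ)
    (hpos : ∀ n, 0 ≤ Λ n) (hunb : Tendsto Λ atTop atTop)
    (p : ℝ) (hp : 1 ≤ p)
    (hlim : ∀ (A : Finset ℕ) (a : ℕ → ℂ),
      Tendsto (dirichletMpR Λ p A a) atTop (nhds (dirichletHpNorm Λ p A a)))
    (C : ℝ) (hC : 1 ≤ C)
    (huncond : ∀ (A : Finset ℕ) (a w : ℕ → ℂ), (∀ n ∈ A, ‖w n‖ = 1) →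
      dirichletHpNorm Λ p A (fun n => w n * a n) ≤ C * dirichletHpNorm Λ p A a) :
    ∃ c' C' : ℝ, 0 < c' ∧ 0 < C' ∧ ∀ (A : Finset ℕ) (a : ℕ → ℂ),
      c' * Real.sqrt (∑ n ∈ A, ‖a n‖ ^ 2) ≤ dirichletHpNorm Λ p A a ∧
        dirichletHpNorm Λ p A a ≤ C' * Real.sqrt (∑ n ∈ A, ‖a n‖ ^ 2) :=
  unconditional_implies_H2_general Λ p hp hlim C hC huncond
end
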